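/- arXiv:1508.04448 — 9 statements merged into one kernel-verified Lean document; each statement's English description precedes it below -/
import Mathlib

section
/- Let k ≥ 1 and let μ_k be a probability measure on {0,1}^{k+1} that is locally translation invariant, meaning that for all (η_0,...,η_{k-1}) ∈ {0,1}^k, ∑_{σ∈{0,1}} μ_k(η_0,...,η_{k-1},σ) = ∑_{σ∈{0,1}} μ_k(σ,η_0,...,η_{k-1}). Define μ_{k+1} on {0,1}^{k+2} by μ_{k+1}(η_0,...,η_{k+1}) = μ_k(η_0,...,η_k)·μ_k(η_1,...,η_{k+1})/μ_{k-1}(η_1,...,η_k) when the denominator μ_{k-1}(η_1,...,η_k) := ∑_{σ} μ_k(η_1,...,η_k,σ) is nonzero, and μ_{k+1} = 0 otherwise. Then μ_{k+1} is a probability measure on {0,1}^{k+2}. -/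
/-- Local translation invariance for a measure on `{0,1}^{k+1}`. -/
def IsLTI (k : ℕ) (μ : (Fin (k + 1) → Bool) → ℝ) : Prop :=
  ∀ η : Fin k → Bool, (∑ σ : Bool, μ (Fin.snoc η σ)) = ∑ σ : Bool, μ (Fin.cons σ η)

/-- The Markovian extension of a measure on `{0,1}^{k+1}` to `{0,1}^{k+2}`. -/
noncomputable def markovExt (k : ℕ) (μ : (Fin (k + 1) → Bool) → ℝ) :
    (Fin (k + 1 + 1) → Bool) → ℝ := fun η =>
  if (∑ σ : Bool, μ (Fin.snoc (fun i : Fin k => η i.succ.castSucc) σ)) = 0 then 0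
  else μ (fun i => η i.castSucc) * μ (fun i => η i.succ)
        / ∑ σ : Bool, μ (Fin.snoc (fun i : Fin k => η i.succ.castSucc) σ)

theorem stmt0 (k : ℕ) (hk : 1 ≤ k) (μ : (Fin (k + 1) → Bool) → ℝ)
    (hpos : ∀ η, 0 ≤ μ η) (hsum : (∑ η, μ η) = 1) (hLTI : IsLTI k μ) :
    (∀ η, 0 ≤ markovExt k μ η) ∧ (∑ η, markovExt k μ η) = 1 := by
  have hD : ∀ η : Fin k → Bool, 0 ≤ ∑ σ : Bool, μ (Fin.snoc η σ) := fun η =>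
    Finset.sum_nonneg fun σ _ => hpos _
  constructor
  · intro η
    unfold markovExt
    split
    · exact le_refl 0
    · next h =>
      exact div_nonneg (mul_nonneg (hpos _) (hpos _)) (hD _)
  · -- sum over last coordinate
    have key : ∀ η' : Fin (k + 1) → Bool,
        (∑ τ : Bool, markovExt k μ (Fin.snoc η' τ)) = μ η' := by
      intro η'
      have hmid' : ∀ τ : Bool, (fun i : Fin k => (Fin.snoc η' τ : Fin (k+1+1) → Bool) (i.succ.castSucc))
          = fun i : Fin k => η' i.succ := by
        intro τ; funext i
        have : (i.succ.castSucc : Fin (k + 1 + 1)) = Fin.castSucc i.succ := rfl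
        rw [this, Fin.snoc_castSucc]
      have hfst : ∀ τ : Bool, (fun i : Fin (k + 1) => (Fin.snoc η' τ : Fin (k+1+1) → Bool) i.castSucc) = η' := by
        intro τ; funext i; rw [Fin.snoc_castSucc]
      have hsnd : ∀ τ : Bool, (fun i : Fin (k + 1) => (Fin.snoc η' τ : Fin (k+1+1) → Bool) i.succ)
          = Fin.snoc (fun i : Fin k => η' i.succ) τ := by
        intro τ
        funext i
        refine Fin.lastCases ?_ (fun j => ?_) i
        · simp [Fin.succ_last]
        · have h1 : (Fin.castSucc j).succ = Fin.castSucc j.succ := rfl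
          rw [h1, Fin.snoc_castSucc, Fin.snoc_castSucc]
      set D := ∑ σ : Bool, μ (Fin.snoc (fun i : Fin k => η' i.succ) σ) with hDdef
      by_cases hD0 : D = 0
      · -- each term is 0, and μ η' = 0
        have hall : ∀ τ : Bool, markovExt k μ (Fin.snoc η' τ) = 0 := by
          intro τ
          unfold markovExt
          rw [hmid' τ, ← hDdef, if_pos hD0]
        rw [Finset.sum_congr rfl fun τ _ => hall τ, Finset.sum_const]
        -- show μ η' = 0
        have hLTIeq := hLTI (fun i : Fin k => η' i.succ)
        rw [← hDdef] at hLTIeq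
        have hcons : Fin.cons (η' 0) (fun i : Fin k => η' i.succ) = η' := by
          funext i; exact Fin.cons_self_tail η' ▸ rfl
        have hzero : μ η' = 0 := by
          have h2 : (∑ σ : Bool, μ (Fin.cons σ (fun i : Fin k => η' i.succ))) = 0 := by
            rw [← hLTIeq, hD0]
          have := Finset.sum_eq_zero_iff_of_nonneg
            (fun σ _ => hpos (Fin.cons σ (fun i : Fin k => η' i.succ))) |>.mp h2
          have h3 := this (η' 0) (Finset.mem_univ _)
          rwa [hcons] at h3
        simp [hzero]
      · have hall : ∀ τ : Bool, markovExt k μ (Fin.snoc η' τ)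
            = μ η' * μ (Fin.snoc (fun i : Fin k => η' i.succ) τ) / D := by
          intro τ
          unfold markovExt
          rw [hmid' τ, ← hDdef, if_neg hD0, hfst τ, hsnd τ]
        rw [Finset.sum_congr rfl fun τ _ => hall τ]
        rw [← Finset.sum_div, ← Finset.mul_sum, ← hDdef]
        field_simp
    calc (∑ η, markovExt k μ η)
        = ∑ p : Bool × (Fin (k+1) → Bool), markovExt k μ (Fin.snoc p.2 p.1) :=
          (Fintype.sum_equiv (Fin.snocEquiv fun _ => Bool) _ _ (fun p => rfl)).symm
      _ = ∑ η' : Fin (k+1) → Bool, ∑ τ : Bool, markovExt k μ (Fin.snoc η' τ) := by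
          rw [Fintype.sum_prod_type, Finset.sum_comm]
      _ = ∑ η', μ η' := Finset.sum_congr rfl fun η' _ => key η'
      _ = 1 := hsum
end

section
/- Let k ≥ 1 and let μ_k be a locally translation invariant probability measure on {0,1}^{k+1}, and let μ_{k+1} be its Markovian extension defined by μ_{k+1}(η_0,...,η_{k+1}) = μ_k(η_0,...,η_k)·μ_k(η_1,...,η_{k+1})/μ_{k-1}(η_1,...,η_k) (set to 0 when μ_{k-1}(η_1,...,η_k)=0). Then μ_{k+1} is locally translation invariant, i.e., ∑_σ μ_{k+1}(η_0,...,η_k,σ) = ∑_σ μ_{k+1}(σ,η_0,...,η_k) for all (η_0,...,η_k), and its marginal on the first k+1 coordinates equals μ_k. -/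
open Finset

theorem sum_ite_mul_div_eq {ι K : Type*} [Fintype ι] [Field K] [DecidableEq K] {g : ι → K}
    {a Z : K} (hg : ∑ i, g i = Z) (ha : Z = 0 → a = 0) :
    ∑ i, (if Z = 0 then 0 else a * g i / Z) = a := by
  by_cases hZ : Z = 0
  · simp only [hZ, if_true, sum_const_zero, ha hZ]
  · simp only [hZ, if_false]
    rw [← sum_div, ← mul_sum, hg, mul_div_cancel_right₀ a hZ]

section MarkovExt

variable {k : ℕ} (μ : (Fin (k + 1) → Bool) → ℝ)

theorem markovExt_snoc (η : Fin (k + 1) → Bool) (σ : Bool) :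
    markovExt k μ (Fin.snoc η σ) =
      if ∑ τ : Bool, μ (Fin.snoc (Fin.tail η) τ) = 0 then 0
      else μ η * μ (Fin.snoc (Fin.tail η) σ) / ∑ τ : Bool, μ (Fin.snoc (Fin.tail η) τ) := by
  have htail : (fun i : Fin (k + 1) => (Fin.snoc η σ : Fin (k + 1 + 1) → Bool) i.succ)
      = Fin.snoc (Fin.tail η) σ := by
    funext i
    refine Fin.lastCases ?_ (fun j => ?_) i
    · simp only [Fin.succ_last, Fin.snoc_last]
    · rw [Fin.succ_castSucc, Fin.snoc_castSucc, Fin.snoc_castSucc, Fin.tail]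
  simp only [markovExt, Fin.snoc_castSucc, htail]
  rfl

theorem markovExt_cons (σ : Bool) (η : Fin (k + 1) → Bool) :
    markovExt k μ (Fin.cons σ η) =
      if ∑ τ : Bool, μ (Fin.snoc (Fin.init η) τ) = 0 then 0
      else μ (Fin.cons σ (Fin.init η)) * μ η / ∑ τ : Bool, μ (Fin.snoc (Fin.init η) τ) := by
  have hinit : (fun i : Fin (k + 1) => (Fin.cons σ η : Fin (k + 1 + 1) → Bool) i.castSucc)
      = Fin.cons σ (Fin.init η) := by
    funext i
    refine Fin.cases ?_ (fun j => ?_) i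
    · simp only [Fin.castSucc_zero, Fin.cons_zero]
    · simp only [← Fin.succ_castSucc, Fin.cons_succ, Fin.init]
  simp only [markovExt, ← Fin.succ_castSucc, Fin.cons_succ, hinit]
  rfl

variable {μ}

theorem sum_markovExt_snoc (hpos : ∀ η, 0 ≤ μ η) (hLTI : IsLTI k μ) (η : Fin (k + 1) → Bool) :
    ∑ σ : Bool, markovExt k μ (Fin.snoc η σ) = μ η := by
  simp only [markovExt_snoc]
  refine sum_ite_mul_div_eq rfl fun hZ => ?_
  rw [hLTI, Fintype.sum_eq_zero_iff_of_nonneg fun _ => hpos _] at hZ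
  rw [← Fin.cons_self_tail η]
  exact congrFun hZ (η 0)

theorem isLTI_markovExt (hpos : ∀ η, 0 ≤ μ η) (hLTI : IsLTI k μ) :
    IsLTI (k + 1) (markovExt k μ) := by
  intro η
  rw [sum_markovExt_snoc hpos hLTI]
  simp only [markovExt_cons, mul_comm _ (μ η)]
  refine (sum_ite_mul_div_eq (hLTI _).symm fun hW => ?_).symm
  rw [Fintype.sum_eq_zero_iff_of_nonneg fun _ => hpos _] at hW
  rw [← Fin.snoc_init_self η]
  exact congrFun hW (η (Fin.last k))

end MarkovExt

theorem stmt1_general (k : ℕ) (μ : (Fin (k + 1) → Bool) → ℝ)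
    (hpos : ∀ η, 0 ≤ μ η) (hLTI : IsLTI k μ) :
    IsLTI (k + 1) (markovExt k μ) ∧
      ∀ η : Fin (k + 1) → Bool, (∑ σ : Bool, markovExt k μ (Fin.snoc η σ)) = μ η :=
  ⟨isLTI_markovExt hpos hLTI, sum_markovExt_snoc hpos hLTI⟩

theorem stmt1 (k : ℕ) (hk : 1 ≤ k) (μ : (Fin (k + 1) → Bool) → ℝ)
    (hpos : ∀ η, 0 ≤ μ η) (hsum : (∑ η, μ η) = 1) (hLTI : IsLTI k μ) :
    IsLTI (k + 1) (markovExt k μ) ∧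
      ∀ η : Fin (k + 1) → Bool, (∑ σ : Bool, markovExt k μ (Fin.snoc η σ)) = μ η :=
  stmt1_general k μ hpos hLTI
end

section
/- Let k ≥ 1, let μ_k be a locally translation invariant probability measure on {0,1}^{k+1}, let j > k, and let ν_j be any probability measure on {0,1}^{j+1} such that for every i with 0 ≤ i ≤ j−k, the marginal of ν_j on coordinates {i,...,i+k} equals μ_k. Then S(ν_j) ≤ S(μ_k) + (j−k)·[S(μ_k) − S(μ_{k-1})], where μ_{k-1} is the marginal of μ_k on its first k coordinates. -/
/-- Shannon entropy of a measure on a finite set (with `0 log 0 = 0`). -/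
noncomputable def shannonEntropy {Q : Type*} [Fintype Q] (μ : Q → ℝ) : ℝ :=
  -∑ q, μ q * Real.log (μ q)

/-- The marginal of a measure on `{0,1}^{k+1}` on the first `k` coordinates. -/
noncomputable def marg (k : ℕ) (μ : (Fin (k + 1) → Bool) → ℝ) : (Fin k → Bool) → ℝ :=
  fun ζ => ∑ σ : Bool, μ (Fin.snoc ζ σ)

open Finset Real

theorem mul_log_sub_mul_log_le {x y : ℝ} (hx : 0 ≤ x) (hy : 0 ≤ y) (hxy : 0 < x → 0 < y) :
    x * log y - x * log x ≤ y - x := by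
  rcases hx.eq_or_lt with rfl | hx
  · simpa using hy
  have hy := hxy hx
  have h := mul_le_mul_of_nonneg_left (log_le_sub_one_of_pos (div_pos hy hx)) hx.le
  rw [log_div hy.ne' hx.ne', mul_sub, mul_sub, mul_div_cancel₀ _ hx.ne', mul_one] at h
  linarith

theorem Finset.sum_mul_log_sub_le {ι : Type*} (s : Finset ι) {x y : ι → ℝ}
    (hx : ∀ i ∈ s, 0 ≤ x i) (hxy : ∀ i ∈ s, x i ≤ y i) :
    ∑ i ∈ s, (x i * log (y i) - x i * log (x i))
      ≤ (∑ i ∈ s, x i) * log (∑ i ∈ s, y i) - (∑ i ∈ s, x i) * log (∑ i ∈ s, x i) := by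
  set X := ∑ i ∈ s, x i
  set Y := ∑ i ∈ s, y i
  rcases (sum_nonneg hx).eq_or_lt with hX | hX
  · have hx0 : ∀ i ∈ s, x i = 0 := (sum_eq_zero_iff_of_nonneg hx).mp hX.symm
    rw [show X = 0 from hX.symm, sum_eq_zero fun i hi => by simp [hx0 i hi]]
    simp
  have hY : 0 < Y := hX.trans_le (sum_le_sum hxy)
  -- Gibbs' inequality against the rescaled weights `y i * X / Y`, which have the same total mass.
  have key : ∀ i ∈ s, x i * log (y i) - x i * log (x i)
      ≤ y i * X / Y - x i - x i * log X + x i * log Y := by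
    intro i hi
    have hyi : 0 ≤ y i := (hx i hi).trans (hxy i hi)
    have h := mul_log_sub_mul_log_le (hx i hi) (by positivity : 0 ≤ y i * X / Y)
      fun hxi => by have := hxi.trans_le (hxy i hi); positivity
    rcases (hx i hi).eq_or_lt with hxi | hxi
    · simp only [← hxi, zero_mul, sub_zero, add_zero] at h ⊢
      linarith
    · have hyi : 0 < y i := hxi.trans_le (hxy i hi)
      rw [log_div (by positivity) hY.ne', log_mul hyi.ne' hX.ne'] at h
      linarith
  refine (sum_le_sum key).trans (le_of_eq ?_)
  simp only [sum_add_distrib, sum_sub_distrib, ← sum_mul, ← sum_div]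
  field_simp
  ring

noncomputable def pushforward {Ω α : Type*} [Fintype Ω] [DecidableEq α] (X : Ω → α)
    (ν : Ω → ℝ) (a : α) : ℝ :=
  ∑ ω, if X ω = a then ν ω else 0

noncomputable def entropy {Ω α : Type*} [Fintype Ω] [Fintype α] [DecidableEq α]
    (ν : Ω → ℝ) (X : Ω → α) : ℝ :=
  shannonEntropy (pushforward X ν)

section pushforward

variable {Ω α β : Type*} [Fintype Ω] [DecidableEq α] [DecidableEq β] (ν : Ω → ℝ)

theorem sum_pushforward_mul [Fintype α] (X : Ω → α) (F : α → ℝ) :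
    ∑ a, pushforward X ν a * F a = ∑ ω, ν ω * F (X ω) := by
  simp only [pushforward, sum_mul, ite_mul, zero_mul]
  rw [sum_comm]
  simp

theorem pushforward_comp [Fintype α] (X : Ω → α) (f : α → β) :
    pushforward (f ∘ X) ν = pushforward f (pushforward X ν) := by
  ext b
  change (∑ ω, if f (X ω) = b then ν ω else 0) = ∑ a, if f a = b then pushforward X ν a else 0
  simpa [mul_ite] using (sum_pushforward_mul ν X fun a => if f a = b then 1 else 0).symm

theorem sum_pushforward_prodMk_left [Fintype α] (X : Ω → α) (Y : Ω → β) (b : β) :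
    ∑ a, pushforward (fun ω => (X ω, Y ω)) ν (a, b) = pushforward Y ν b := by
  simp only [pushforward, Prod.mk.injEq, ite_and]
  rw [sum_comm]
  simp

theorem pushforward_le_pushforward (hν : 0 ≤ ν) {X : Ω → α} {Y : Ω → β} {a : α} {b : β}
    (h : ∀ ω, X ω = a → Y ω = b) : pushforward X ν a ≤ pushforward Y ν b :=
  sum_le_sum fun ω _ => by
    by_cases hX : X ω = a
    · simp [hX, h ω hX]
    · rw [if_neg hX]
      split_ifs
      exacts [hν ω, le_rfl]

theorem pushforward_nonneg (hν : 0 ≤ ν) (X : Ω → α) (a : α) : 0 ≤ pushforward X ν a :=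
  sum_nonneg fun ω _ => by
    split_ifs
    exacts [hν ω, le_rfl]

theorem entropy_eq_neg_sum [Fintype α] (X : Ω → α) :
    entropy ν X = -∑ ω, ν ω * log (pushforward X ν (X ω)) := by
  rw [entropy, shannonEntropy, sum_pushforward_mul ν X fun a => log (pushforward X ν a)]

theorem entropy_congr [Fintype α] [Fintype β] {X : Ω → α} {Y : Ω → β}
    (h : ∀ ω ω', X ω' = X ω ↔ Y ω' = Y ω) :
    entropy ν X = entropy ν Y := by
  have hfiber ω : pushforward X ν (X ω) = pushforward Y ν (Y ω) :=
    sum_congr rfl fun ω' _ => if_congr (h ω ω') rfl rfl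
  simp only [entropy_eq_neg_sum, hfiber]

theorem entropy_id [DecidableEq Ω] : entropy ν id = shannonEntropy ν := by
  rw [entropy]
  congr 1
  funext ω
  simp [pushforward]

end pushforward

theorem entropy_triple_add_entropy_le {Ω α β γ : Type*} [Fintype Ω] [Fintype α] [Fintype β]
    [Fintype γ] [DecidableEq α] [DecidableEq β] [DecidableEq γ] {ν : Ω → ℝ} (hν : 0 ≤ ν)
    (X : Ω → α) (Y : Ω → β) (Z : Ω → γ) :
    entropy ν (fun ω => (X ω, Y ω, Z ω)) + entropy ν Y
      ≤ entropy ν (fun ω => (X ω, Y ω)) + entropy ν (fun ω => (Y ω, Z ω)) := by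
  set m := pushforward (fun ω => (X ω, Y ω, Z ω)) ν
  set mXY := pushforward (fun ω => (X ω, Y ω)) ν
  set mYZ := pushforward (fun ω => (Y ω, Z ω)) ν
  set mY := pushforward Y ν
  have hXY : entropy ν (fun ω => (X ω, Y ω)) = -∑ x, m x * log (mXY (x.1, x.2.1)) := by
    rw [entropy_eq_neg_sum,
      ← sum_pushforward_mul ν (fun ω => (X ω, Y ω, Z ω)) fun x => log (mXY (x.1, x.2.1))]
  have hY : entropy ν Y = -∑ x, mYZ x * log (mY x.1) := by
    rw [entropy_eq_neg_sum, ← sum_pushforward_mul ν (fun ω => (Y ω, Z ω)) fun x => log (mY x.1)]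
  have hleft : entropy ν (fun ω => (X ω, Y ω, Z ω)) - entropy ν (fun ω => (X ω, Y ω))
      = ∑ b, ∑ c, ∑ a, (m (a, b, c) * log (mXY (a, b)) - m (a, b, c) * log (m (a, b, c))) := by
    rw [hXY, entropy, shannonEntropy, sub_neg_eq_add, neg_add_eq_sub, ← sum_sub_distrib]
    simp only [Fintype.sum_prod_type]
    rw [sum_comm]
    exact sum_congr rfl fun b _ => sum_comm
  have hright : entropy ν (fun ω => (Y ω, Z ω)) - entropy ν Y
      = ∑ b, ∑ c, (mYZ (b, c) * log (mY b) - mYZ (b, c) * log (mYZ (b, c))) := by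
    rw [hY, entropy, shannonEntropy, sub_neg_eq_add, neg_add_eq_sub, ← sum_sub_distrib,
      Fintype.sum_prod_type]
  -- For fixed `(b, c)` this is the log-sum inequality, since `∑ a, m (a, b, c) = mYZ (b, c)`
  -- and `∑ a, mXY (a, b) = mY b`.
  have hfiber : ∀ b c, ∑ a, (m (a, b, c) * log (mXY (a, b)) - m (a, b, c) * log (m (a, b, c)))
      ≤ mYZ (b, c) * log (mY b) - mYZ (b, c) * log (mYZ (b, c)) := by
    intro b c
    have h := sum_mul_log_sub_le univ (x := fun a => m (a, b, c)) (y := fun a => mXY (a, b))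
      (fun a _ => pushforward_nonneg ν hν _ _)
      (fun a _ => pushforward_le_pushforward ν hν fun ω hω => by simp_all)
    rwa [sum_pushforward_prodMk_left ν X (fun ω => (Y ω, Z ω)),
      sum_pushforward_prodMk_left ν X Y] at h
  linarith [sum_le_sum fun b (_ : b ∈ univ) => sum_le_sum fun c (_ : c ∈ univ) => hfiber b c]

theorem Finset.restrict_eq_restrict_iff {ι : Type*} {β : ι → Type*} {S : Finset ι}
    {η η' : (i : ι) → β i} : S.restrict η = S.restrict η' ↔ ∀ i ∈ S, η i = η' i := by
  simp [funext_iff]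

noncomputable def marginalEntropy {ι α : Type*} [Fintype ι] [DecidableEq ι] [Fintype α]
    [DecidableEq α] (ν : (ι → α) → ℝ) (S : Finset ι) : ℝ :=
  entropy ν S.restrict

section marginalEntropy

variable {ι α : Type*} [Fintype ι] [DecidableEq ι] [Fintype α] [DecidableEq α]
  (ν : (ι → α) → ℝ)

theorem marginalEntropy_univ : marginalEntropy ν univ = shannonEntropy ν := by
  rw [marginalEntropy, ← entropy_id]
  exact entropy_congr ν fun η η' => by simp [funext_iff]

theorem marginalEntropy_union_add_inter_le (hν : 0 ≤ ν) (S T : Finset ι) :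
    marginalEntropy ν (S ∪ T) + marginalEntropy ν (S ∩ T)
      ≤ marginalEntropy ν S + marginalEntropy ν T := by
  have hST : marginalEntropy ν (S ∪ T)
      = entropy ν fun η => ((S \ T).restrict η, (S ∩ T).restrict η, (T \ S).restrict η) :=
    entropy_congr ν fun η η' => by
      simp only [restrict_eq_restrict_iff, Prod.mk.injEq, mem_union, mem_sdiff, mem_inter]
      grind
  have hS : marginalEntropy ν S
      = entropy ν fun η => ((S \ T).restrict η, (S ∩ T).restrict η) :=
    entropy_congr ν fun η η' => by
      simp only [restrict_eq_restrict_iff, Prod.mk.injEq, mem_sdiff, mem_inter]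
      grind
  have hT : marginalEntropy ν T
      = entropy ν fun η => ((S ∩ T).restrict η, (T \ S).restrict η) :=
    entropy_congr ν fun η η' => by
      simp only [restrict_eq_restrict_iff, Prod.mk.injEq, mem_sdiff, mem_inter]
      grind
  rw [hST, hS, hT]
  exact entropy_triple_add_entropy_le hν _ _ _

end marginalEntropy

def window (n i m : ℕ) : Finset (Fin (n + 1)) :=
  univ.filter fun x => i ≤ (x : ℕ) ∧ (x : ℕ) < i + m

def windowMap {α : Type*} {n : ℕ} (i m : ℕ) (h : i + m ≤ n + 1) (η : Fin (n + 1) → α) :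
    Fin m → α :=
  fun t => η ⟨i + t, by omega⟩

theorem window_eq_univ (n : ℕ) : window n 0 (n + 1) = univ := by
  ext x
  simpa [window] using Fin.is_le x

theorem window_zero_union_window (n i k : ℕ) :
    window n 0 (i + k) ∪ window n i (k + 1) = window n 0 (i + k + 1) := by
  ext x
  simp only [window, mem_union, mem_filter, mem_univ, true_and]
  omega

theorem window_zero_inter_window (n i k : ℕ) :
    window n 0 (i + k) ∩ window n i (k + 1) = window n i k := by
  ext x
  simp only [window, mem_inter, mem_filter, mem_univ, true_and]
  omega

theorem marginalEntropy_window {α : Type*} [Fintype α] [DecidableEq α] {n i m : ℕ}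
    (ν : (Fin (n + 1) → α) → ℝ) (h : i + m ≤ n + 1) :
    marginalEntropy ν (window n i m) = entropy ν (windowMap i m h) :=
  entropy_congr ν fun η η' => by
    rw [restrict_eq_restrict_iff, funext_iff]
    simp only [windowMap, window, mem_filter, mem_univ, true_and]
    constructor
    · intro H t
      exact H _ ⟨by simp, by simp⟩
    · intro H x hx
      simpa [show i + (x - i) = x by omega] using H ⟨x - i, by omega⟩

theorem pushforward_init_eq_marg {k : ℕ} (μ : (Fin (k + 1) → Bool) → ℝ) :
    pushforward Fin.init μ = marg k μ := by
  ext ζ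
  rw [pushforward, marg, ← (Fin.snocEquiv fun _ => Bool).sum_comp, Fintype.sum_prod_type]
  simp [Fin.snocEquiv]

theorem shannonEntropy_le_of_pushforward_windowMap {k n : ℕ} (hkn : k ≤ n)
    (μ : (Fin (k + 1) → Bool) → ℝ) (ν : (Fin (n + 1) → Bool) → ℝ) (hν : 0 ≤ ν)
    (hwin : ∀ i (hi : i + k ≤ n), pushforward (windowMap i (k + 1) (by omega)) ν = μ) :
    shannonEntropy ν
      ≤ shannonEntropy μ + (n - k : ℕ) * (shannonEntropy μ - shannonEntropy (marg k μ)) := by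
  set Δ := shannonEntropy μ - shannonEntropy (marg k μ)
  have hfull i (hi : i + k ≤ n) : marginalEntropy ν (window n i (k + 1)) = shannonEntropy μ := by
    rw [marginalEntropy_window ν (by omega), entropy, hwin i hi]
  have hinner i (hi : i + k ≤ n) :
      marginalEntropy ν (window n i k) = shannonEntropy (marg k μ) := by
    rw [marginalEntropy_window ν (by omega), entropy,
      show windowMap i k (by omega) = Fin.init ∘ windowMap i (k + 1) (by omega) from rfl,
      pushforward_comp, hwin i hi, pushforward_init_eq_marg]
  have hstep i (hi : i + k ≤ n) :
      marginalEntropy ν (window n 0 (i + k + 1)) ≤ marginalEntropy ν (window n 0 (i + k)) + Δ := by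
    have h := marginalEntropy_union_add_inter_le ν hν (window n 0 (i + k)) (window n i (k + 1))
    rw [window_zero_union_window, window_zero_inter_window, hfull i hi, hinner i hi] at h
    linarith
  have hprefix i (hi : i + k ≤ n) :
      marginalEntropy ν (window n 0 (i + k + 1)) ≤ shannonEntropy μ + i * Δ := by
    induction i with
    | zero => simp [hfull 0 (by omega)]
    | succ i ih =>
      have h := hstep (i + 1) hi
      rw [show i + 1 + k = i + k + 1 by omega] at h ⊢
      push_cast
      linarith [ih (by omega)]
  have h := hprefix (n - k) (by omega)
  rwa [show n - k + k + 1 = n + 1 by omega, window_eq_univ, marginalEntropy_univ] at h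

theorem stmt7 (k j : ℕ) (hj : k < j) (μ : (Fin (k + 1) → Bool) → ℝ)
    (ν : (Fin (j + 1) → Bool) → ℝ) (hνpos : ∀ η, 0 ≤ ν η)
    (hmarg : ∀ i : ℕ, ∀ hi : i + k ≤ j, ∀ ζ : Fin (k + 1) → Bool,
      (∑ η : Fin (j + 1) → Bool,
        if (∀ t : Fin (k + 1), η ⟨i + t, by have := t.isLt; omega⟩ = ζ t) then ν η else 0)
        = μ ζ) :
    shannonEntropy ν
      ≤ shannonEntropy μ + ((j - k : ℕ) : ℝ) * (shannonEntropy μ - shannonEntropy (marg k μ)) := by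
  refine shannonEntropy_le_of_pushforward_windowMap hj.le μ ν hνpos fun i hi => ?_
  funext ζ
  rw [← hmarg i hi ζ]
  exact sum_congr rfl fun η _ => if_congr funext_iff rfl rfl
end

section
/- For each k ≥ 1, the measures π_k ν_C, where C ranges over the directed cycles of the de Bruijn graph G_k and π_k ν_C gives weight 1/|C| to each edge of C and 0 elsewhere, are precisely the extreme points of the convex polytope M_k of locally translation invariant probability measures on {0,1}^{k+1}. -/
/-- A directed cycle in the de Bruijn graph `G_k`: a cyclic sequence of pairwise
distinct vertices `v_0, ..., v_{p-1}` in `{0,1}^k` (cyclic successor given by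
`finRotate`) such that consecutive vertices overlap as required for a directed
edge `aθb : aθ → θb` of `G_k` to join them (loops, `p = 1`, are allowed). -/
def IsCycle (k p : ℕ) (v : Fin p → (Fin k → Bool)) : Prop :=
  0 < p ∧ Function.Injective v ∧
    ∀ i : Fin p, ∀ j : ℕ, ∀ h : j + 1 < k,
      v i ⟨j + 1, h⟩ = v (finRotate p i) ⟨j, by omega⟩

/-- The measure `π_k ν_C` on `{0,1}^{k+1}` (the edge set of `G_k`) associated to a
cycle `C` given by vertices `v` : it gives weight `1/|C|` to each edge of `C` and
`0` to all other edges.  The edge from `v_i` to `v_{i+1}` is the string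
`Fin.cons (v_i)_0 (v_{i+1})`. -/
noncomputable def cycleMeasure (k p : ℕ) (hk : 0 < k) (v : Fin p → (Fin k → Bool)) :
    (Fin (k + 1) → Bool) → ℝ := fun η =>
  (p : ℝ)⁻¹ * ∑ i : Fin p,
    if η = Fin.cons (v i ⟨0, hk⟩) (v (finRotate p i)) then 1 else 0


/-!
The local translation invariance of `μ` says that, at every vertex of `G_k`, the mass of the
outgoing edges equals that of the incoming ones: `μ` is a unit flow on `G_k`. A flow supported on
the edges of a cycle `C` is constant along it, hence equals `π_k ν_C`; so if `π_k ν_C` is an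
interior point of a segment of `M_k`, both endpoints, being supported on `C`, equal it.
Conversely, conservation lets one keep following edges of positive mass, so the support of every
`μ ∈ M_k` contains a cycle `C`. If `m` is the least mass of an edge of `C`, then
`μ - |C| m π_k ν_C` is still a nonnegative flow, which exhibits `μ` as a proper convex combination
of `π_k ν_C` and another point of `M_k` unless `μ = π_k ν_C`.
-/

open Finset Function

section Tuples
variable {n : ℕ} {α M : Type*} [Fintype α] [DecidableEq α] [AddCommMonoid M]

lemma sum_ite_snoc_eq (η : Fin n → α) (e : Fin (n + 1) → α) (c : M) :
    (∑ σ : α, if Fin.snoc η σ = e then c else 0) = if Fin.init e = η then c else 0 := by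
  by_cases he : Fin.init e = η
  · subst he
    have key (σ : α) : Fin.snoc (Fin.init e) σ = e ↔ σ = e (Fin.last n) := by
      conv_lhs => rhs; rw [← Fin.snoc_init_self e]
      exact Fin.snoc_injective2.eq_iff.trans (and_iff_right rfl)
    simp [key]
  · rw [if_neg he]
    refine sum_eq_zero fun σ _ => if_neg ?_
    rintro rfl
    exact he (Fin.init_snoc _ _)

lemma sum_ite_cons_eq (η : Fin n → α) (e : Fin (n + 1) → α) (c : M) :
    (∑ σ : α, if Fin.cons σ η = e then c else 0) = if Fin.tail e = η then c else 0 := by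
  by_cases he : Fin.tail e = η
  · subst he
    have key (σ : α) : Fin.cons σ (Fin.tail e) = e ↔ σ = e 0 := by
      conv_lhs => rhs; rw [← Fin.cons_self_tail e]
      exact Fin.cons_injective2.eq_iff.trans (and_iff_left rfl)
    simp [key]
  · rw [if_neg he]
    refine sum_eq_zero fun σ _ => if_neg ?_
    rintro rfl
    exact he (Fin.tail_cons _ _)

end Tuples

lemma IsLTI.sub {k : ℕ} {μ ν : (Fin (k + 1) → Bool) → ℝ} (hμ : IsLTI k μ) (hν : IsLTI k ν) :
    IsLTI k (μ - ν) := fun η => by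
  simp only [Pi.sub_apply, sum_sub_distrib, hμ η, hν η]

lemma IsLTI.smul {k : ℕ} {μ : (Fin (k + 1) → Bool) → ℝ} (c : ℝ) (hμ : IsLTI k μ) :
    IsLTI k (c • μ) := fun η => by
  simp only [Pi.smul_apply, ← smul_sum, hμ η]

/-- The polytope `M_k`. -/
def ltiMeasures (k : ℕ) : Set ((Fin (k + 1) → Bool) → ℝ) :=
  {ν | (∀ η, 0 ≤ ν η) ∧ (∑ η, ν η) = 1 ∧ IsLTI k ν}

section CycleFlow
variable {k p : ℕ} (hk : 0 < k) (v : Fin p → Fin k → Bool)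

def cycleEdge (i : Fin p) : Fin (k + 1) → Bool :=
  Fin.cons (v i ⟨0, hk⟩) (v (finRotate p i))

def cycleFlow (w : Fin p → ℝ) (η : Fin (k + 1) → Bool) : ℝ :=
  ∑ i, if η = cycleEdge hk v i then w i else 0

variable {hk v}

lemma tail_cycleEdge (i : Fin p) : Fin.tail (cycleEdge hk v i) = v (finRotate p i) :=
  Fin.tail_cons _ _

lemma IsCycle.init_cycleEdge (hv : IsCycle k p v) (i : Fin p) :
    Fin.init (cycleEdge hk v i) = v i := by
  funext ⟨j, hj⟩
  cases j with
  | zero => rfl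
  | succ j => exact (hv.2.2 i j hj).symm

lemma IsCycle.injective_cycleEdge (hv : IsCycle k p v) : Injective (cycleEdge hk v) :=
  fun i j h => (finRotate p).injective <| hv.2.1 <| by
    simpa only [tail_cycleEdge] using congrArg Fin.tail h

lemma cycleMeasure_eq_cycleFlow :
    cycleMeasure k p hk v = cycleFlow hk v fun _ => (p : ℝ)⁻¹ := by
  funext η
  simp only [cycleMeasure, cycleFlow, cycleEdge, mul_sum, mul_ite, mul_one, mul_zero]
  rfl

lemma sum_cycleFlow (w : Fin p → ℝ) : ∑ η, cycleFlow hk v w η = ∑ i, w i := by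
  simp only [cycleFlow]
  rw [sum_comm]
  simp

lemma IsCycle.cycleFlow_cycleEdge (hv : IsCycle k p v) (w : Fin p → ℝ) (i : Fin p) :
    cycleFlow hk v w (cycleEdge hk v i) = w i := by
  simp [cycleFlow, hv.injective_cycleEdge.eq_iff]

lemma cycleFlow_eq_zero {η : Fin (k + 1) → Bool} (hη : η ∉ Set.range (cycleEdge hk v))
    (w : Fin p → ℝ) : cycleFlow hk v w η = 0 :=
  sum_eq_zero fun i _ => if_neg fun h => hη ⟨i, h.symm⟩

lemma IsCycle.eq_cycleFlow (hv : IsCycle k p v) {x : (Fin (k + 1) → Bool) → ℝ}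
    (hx : ∀ η ∉ Set.range (cycleEdge hk v), x η = 0) :
    x = cycleFlow hk v (x ∘ cycleEdge hk v) := by
  funext η
  by_cases hη : η ∈ Set.range (cycleEdge hk v)
  · obtain ⟨i, rfl⟩ := hη
    rw [hv.cycleFlow_cycleEdge, comp_apply]
  · rw [hx η hη, cycleFlow_eq_zero hη]

lemma IsCycle.isLTI_cycleFlow_iff (hv : IsCycle k p v) (w : Fin p → ℝ) :
    IsLTI k (cycleFlow hk v w) ↔ ∀ i, w (finRotate p i) = w i := by
  have hout (η : Fin k → Bool) :
      ∑ σ, cycleFlow hk v w (Fin.snoc η σ) = ∑ i, if v i = η then w i else 0 := by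
    simp only [cycleFlow]
    rw [sum_comm]
    simp only [sum_ite_snoc_eq, hv.init_cycleEdge]
  have hin (η : Fin k → Bool) :
      ∑ σ, cycleFlow hk v w (Fin.cons σ η) = ∑ i, if v (finRotate p i) = η then w i else 0 := by
    simp only [cycleFlow]
    rw [sum_comm]
    simp only [sum_ite_cons_eq, tail_cycleEdge]
  constructor
  · intro hw i
    have := hw (v (finRotate p i))
    rw [hout, hin] at this
    simpa [hv.2.1.eq_iff] using this
  · intro hw η
    rw [hout, hin, ← Equiv.sum_comp (finRotate p)]
    simp only [hw]

lemma eq_of_apply_finRotate_eq {p : ℕ} {β : Type*} {w : Fin p → β}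
    (hw : ∀ i, w (finRotate p i) = w i) (i j : Fin p) : w i = w j := by
  obtain ⟨n, rfl⟩ : ∃ n, p = n + 1 := Nat.exists_eq_add_one_of_ne_zero i.pos.ne'
  have h0 (i : Fin (n + 1)) : w i = w 0 := by
    conv_lhs => rw [← zero_add i, ← finCycle_apply, finCycle_eq_finRotate_iterate]
    exact congrFun (iterate_invariant (funext hw) i) 0
  rw [h0 i, h0 j]

section CycleMeasure
variable {k p : ℕ} {hk : 0 < k} {v : Fin p → Fin k → Bool}

lemma IsCycle.cycleMeasure_mem (hv : IsCycle k p v) : cycleMeasure k p hk v ∈ ltiMeasures k := by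
  rw [cycleMeasure_eq_cycleFlow]
  refine ⟨fun η => sum_nonneg fun i _ => ?_, ?_, (hv.isLTI_cycleFlow_iff _).2 fun _ => rfl⟩
  · split_ifs <;> positivity
  · simp [sum_cycleFlow, hv.1.ne']

lemma IsCycle.eq_cycleMeasure_of_support (hv : IsCycle k p v) {x : (Fin (k + 1) → Bool) → ℝ}
    (hx : x ∈ ltiMeasures k) (hsupp : ∀ η ∉ Set.range (cycleEdge hk v), x η = 0) :
    x = cycleMeasure k p hk v := by
  have hflow := hv.eq_cycleFlow hsupp
  have hrot := (hv.isLTI_cycleFlow_iff _).1 (hflow ▸ hx.2.2)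
  have hconst (i : Fin p) : x (cycleEdge hk v i) = (p : ℝ)⁻¹ := by
    have hsum := hx.2.1
    rw [hflow, sum_cycleFlow, sum_congr rfl fun j _ => eq_of_apply_finRotate_eq hrot j i] at hsum
    simp only [comp_apply, sum_const, card_univ, Fintype.card_fin, nsmul_eq_mul] at hsum
    exact eq_inv_of_mul_eq_one_right hsum
  rw [hflow, cycleMeasure_eq_cycleFlow]
  exact congrArg _ (funext hconst)

lemma IsCycle.cycleMeasure_mem_extremePoints (hv : IsCycle k p v) :
    cycleMeasure k p hk v ∈ Set.extremePoints ℝ (ltiMeasures k) := by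
  refine ⟨hv.cycleMeasure_mem, fun x₁ hx₁ x₂ hx₂ ⟨a, b, ha, hb, _, hseg⟩ => ?_⟩
  refine hv.eq_cycleMeasure_of_support hx₁ fun η hη => ?_
  have h : a * x₁ η + b * x₂ η = 0 := by
    rw [← cycleFlow_eq_zero hη (fun _ => (p : ℝ)⁻¹), ← cycleMeasure_eq_cycleFlow, ← hseg]
    rfl
  nlinarith [hx₁.1 η, hx₂.1 η]

end CycleMeasure

lemma Finite.exists_mem_periodicPts {α : Type*} [Finite α] [Nonempty α] (f : α → α) :
    ∃ x, x ∈ periodicPts f := by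
  obtain ⟨x₀⟩ := ‹Nonempty α›
  obtain ⟨m, n, hmn, heq⟩ := Finite.exists_ne_map_eq_of_infinite fun n => f^[n] x₀
  wlog hlt : m < n generalizing m n
  · exact this n m hmn.symm heq.symm (by omega)
  refine ⟨f^[m] x₀, mk_mem_periodicPts (Nat.sub_pos_of_lt hlt) ?_⟩
  rw [IsPeriodicPt, IsFixedPt, ← iterate_add_apply, Nat.sub_add_cancel hlt.le, heq]

lemma iterate_finRotate_minimalPeriod {α : Type*} {f : α → α} {x : α}
    (i : Fin (minimalPeriod f x)) :
    f^[finRotate _ i] x = f (f^[i] x) := by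
  have := i.neZero
  rw [← iterate_succ_apply' f, ← iterate_mod_minimalPeriod_eq (n := i + 1), finRotate_apply,
    Fin.val_add, Fin.val_one', Nat.add_mod_mod]

lemma exists_isCycle_of_forall_tail_mem {k : ℕ} (hk : 0 < k) {S : Set (Fin k → Bool)}
    (hS : S.Nonempty) (out : (Fin k → Bool) → Fin (k + 1) → Bool)
    (hout : ∀ w ∈ S, Fin.init (out w) = w ∧ Fin.tail (out w) ∈ S) :
    ∃ p v, IsCycle k p v ∧ ∀ i, ∃ w ∈ S, cycleEdge hk v i = out w := by
  have : Nonempty S := hS.to_subtype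
  let f : S → S := fun w => ⟨Fin.tail (out w), (hout w w.2).2⟩
  obtain ⟨x, hx⟩ := Finite.exists_mem_periodicPts f
  let v : Fin (minimalPeriod f x) → Fin k → Bool := fun i => f^[i] x
  have hnext (i) : v (finRotate _ i) = Fin.tail (out (v i)) := by
    simp only [v, iterate_finRotate_minimalPeriod]
    rfl
  have hinit (i) : Fin.init (out (v i)) = v i := (hout _ (f^[i] x).2).1
  refine ⟨minimalPeriod f x, v, ⟨minimalPeriod_pos_of_mem_periodicPts hx, ?_, ?_⟩, ?_⟩
  · intro i j hij
    exact Fin.ext (iterate_injOn_Iio_minimalPeriod i.2 j.2 (Subtype.ext hij))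
  · intro i j hj
    rw [hnext]
    conv_lhs => rw [← hinit i]
    rfl
  · intro i
    refine ⟨v i, (f^[i] x).2, ?_⟩
    rw [cycleEdge, hnext, ← Fin.cons_self_tail (out (v i))]
    congr 1
    conv_lhs => rw [← hinit i]
    rfl

section Extreme
variable {k : ℕ} {μ : (Fin (k + 1) → Bool) → ℝ}

lemma exists_pos_init_eq_tail (h0 : ∀ η, 0 ≤ μ η) (hμ : IsLTI k μ) {e : Fin (k + 1) → Bool}
    (he : 0 < μ e) : ∃ e', 0 < μ e' ∧ Fin.init e' = Fin.tail e := by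
  have hin : μ e ≤ ∑ σ, μ (Fin.cons σ (Fin.tail e)) := by
    conv_lhs => rw [← Fin.cons_self_tail e]
    exact single_le_sum (f := fun σ => μ (Fin.cons σ (Fin.tail e))) (fun σ _ => h0 _)
      (mem_univ (e 0))
  obtain ⟨σ, -, hσ⟩ := exists_lt_of_sum_lt (s := univ) (f := fun _ => 0)
    (g := fun σ => μ (Fin.snoc (Fin.tail e) σ)) <| by
      simp only [sum_const_zero]; exact (he.trans_le hin).trans_eq (hμ _).symm
  exact ⟨Fin.snoc (Fin.tail e) σ, hσ, Fin.init_snoc _ _⟩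

lemma exists_isCycle_pos (hk : 0 < k) (hμ : μ ∈ ltiMeasures k) :
    ∃ p v, IsCycle k p v ∧ ∀ i, 0 < μ (cycleEdge hk v i) := by
  obtain ⟨h0, hsum, hlti⟩ := hμ
  let S : Set (Fin k → Bool) := {w | ∃ e, 0 < μ e ∧ Fin.init e = w}
  choose! out hout using fun w (hw : w ∈ S) => hw
  obtain ⟨e, -, he⟩ := exists_lt_of_sum_lt (s := univ) (f := fun _ => 0) (g := μ) <| by
    simp only [sum_const_zero, hsum]; exact one_pos
  obtain ⟨p, v, hv, hedge⟩ := exists_isCycle_of_forall_tail_mem hk (S := S) ⟨_, e, he, rfl⟩ out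
    fun w hw => ⟨(hout w hw).2, exists_pos_init_eq_tail h0 hlti (hout w hw).1⟩
  refine ⟨p, v, hv, fun i => ?_⟩
  obtain ⟨w, hw, hi⟩ := hedge i
  exact hi ▸ (hout w hw).1

lemma eq_of_mem_extremePoints_of_smul_le (hμ : μ ∈ Set.extremePoints ℝ (ltiMeasures k))
    {ν : (Fin (k + 1) → Bool) → ℝ} (hν : ν ∈ ltiMeasures k) {s : ℝ} (hs : 0 < s)
    (hle : ∀ η, s * ν η ≤ μ η) : μ = ν := by
  set r := μ - s • ν
  have hr0 (η) : 0 ≤ r η := sub_nonneg.2 (hle η)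
  have hrsum : ∑ η, r η = 1 - s := by
    simp only [r, Pi.sub_apply, Pi.smul_apply, smul_eq_mul, sum_sub_distrib, ← mul_sum,
      hμ.1.2.1, hν.2.1, mul_one]
  rcases (sub_nonneg.1 (hrsum ▸ sum_nonneg fun η _ => hr0 η)).eq_or_lt with rfl | hs1
  · have : r = 0 := funext fun η =>
      (sum_eq_zero_iff_of_nonneg fun η _ => hr0 η).1 (hrsum.trans (sub_self 1)) η (mem_univ η)
    rwa [sub_eq_zero, one_smul] at this
  · have hx : (1 - s)⁻¹ • r ∈ ltiMeasures k := by
      refine ⟨fun η => ?_, ?_, (hμ.1.2.2.sub (hν.2.2.smul s)).smul _⟩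
      · exact mul_nonneg (inv_nonneg.2 (sub_nonneg.2 hs1.le)) (hr0 η)
      · simp only [Pi.smul_apply, smul_eq_mul, ← mul_sum, hrsum]
        exact inv_mul_cancel₀ (sub_pos.2 hs1).ne'
    refine (hμ.2 hν hx ⟨s, 1 - s, hs, sub_pos.2 hs1, by ring, ?_⟩).symm
    rw [smul_smul, mul_inv_cancel₀ (sub_pos.2 hs1).ne', one_smul, add_sub_cancel]

lemma eq_cycleMeasure_of_mem_extremePoints (hk : 0 < k)
    (hμ : μ ∈ Set.extremePoints ℝ (ltiMeasures k)) :
    ∃ p v, IsCycle k p v ∧ μ = cycleMeasure k p hk v := by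
  obtain ⟨p, v, hv, hpos⟩ := exists_isCycle_pos hk hμ.1
  have : Nonempty (Fin p) := ⟨⟨0, hv.1⟩⟩
  obtain ⟨i₀, hi₀⟩ := Finite.exists_min fun i => μ (cycleEdge hk v i)
  refine ⟨p, v, hv, eq_of_mem_extremePoints_of_smul_le hμ hv.cycleMeasure_mem
    (mul_pos (Nat.cast_pos.2 hv.1) (hpos i₀)) fun η => ?_⟩
  rw [cycleMeasure_eq_cycleFlow]
  by_cases hη : η ∈ Set.range (cycleEdge hk v)
  · obtain ⟨i, rfl⟩ := hη
    have : (p : ℝ) ≠ 0 := Nat.cast_ne_zero.2 hv.1.ne'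
    rw [hv.cycleFlow_cycleEdge, mul_comm (p : ℝ), mul_inv_cancel_right₀ this]
    exact hi₀ i
  · rw [cycleFlow_eq_zero hη, mul_zero]
    exact hμ.1.1 η

end Extreme

/-- The cycle measures are precisely the extreme points of the polytope `M_k` of
locally translation invariant probability measures on `{0,1}^{k+1}`. -/
theorem stmt11 (k : ℕ) (hk : 0 < k) (μ : (Fin (k + 1) → Bool) → ℝ) :
    μ ∈ Set.extremePoints ℝ
        {ν : (Fin (k + 1) → Bool) → ℝ | (∀ η, 0 ≤ ν η) ∧ (∑ η, ν η) = 1 ∧ IsLTI k ν}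
      ↔ ∃ (p : ℕ) (v : Fin p → (Fin k → Bool)),
          IsCycle k p v ∧ μ = cycleMeasure k p hk v := by
  refine ⟨eq_cycleMeasure_of_mem_extremePoints hk, ?_⟩
  rintro ⟨p, v, hv, rfl⟩
  exact hv.cycleMeasure_mem_extremePoints
end CycleFlow
end

section
/- The convex polytope M_k of locally translation invariant probability measures on {0,1}^{k+1} has dimension 2^k, i.e., its affine hull within ℝ^{2^{k+1}} has dimension 2^k. -/
open Finset

noncomputable def Lmap (k : ℕ) :
    ((Fin (k + 1) → Bool) → ℝ) →ₗ[ℝ] ((Fin k → Bool) → ℝ) × ℝ where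
  toFun ν := (fun η => (∑ σ : Bool, ν (Fin.snoc η σ)) - ∑ σ : Bool, ν (Fin.cons σ η),
    ∑ η, ν η)
  map_add' μ ν := by
    refine Prod.ext (funext fun η => ?_) ?_ <;>
      simp [Finset.sum_add_distrib] <;> ring
  map_smul' c ν := by
    refine Prod.ext (funext fun η => ?_) ?_ <;>
      simp [Finset.mul_sum] <;> ring

lemma sum_snoc (k : ℕ) (ν : (Fin (k + 1) → Bool) → ℝ) :
    ∑ η : Fin k → Bool, ∑ σ : Bool, ν (Fin.snoc η σ) = ∑ ω, ν ω := by
  calc ∑ η : Fin k → Bool, ∑ σ : Bool, ν (Fin.snoc η σ)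
      = ∑ p : Bool × (Fin k → Bool), ν (Fin.snoc p.2 p.1) := by
        rw [Fintype.sum_prod_type]; exact Finset.sum_comm
    _ = ∑ ω, ν ω :=
        Fintype.sum_equiv (Fin.snocEquiv fun _ => Bool) _ _ (fun p => by
          simp [Fin.snocEquiv])

lemma sum_cons (k : ℕ) (ν : (Fin (k + 1) → Bool) → ℝ) :
    ∑ η : Fin k → Bool, ∑ σ : Bool, ν (Fin.cons σ η) = ∑ ω, ν ω := by
  calc ∑ η : Fin k → Bool, ∑ σ : Bool, ν (Fin.cons σ η)
      = ∑ p : Bool × (Fin k → Bool), ν (Fin.cons p.1 p.2) := by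
        rw [Fintype.sum_prod_type]; exact Finset.sum_comm
    _ = ∑ ω, ν ω :=
        Fintype.sum_equiv (Fin.consEquiv fun _ => Bool) _ _ (fun p => by
          simp [Fin.consEquiv])

lemma snoc_sum_single (k : ℕ) (ω : Fin (k + 1) → Bool) (η : Fin k → Bool) :
    ∑ σ : Bool, (Pi.single ω 1 : (Fin (k+1) → Bool) → ℝ) (Fin.snoc η σ) =
      (Pi.single (Fin.init ω) 1 : (Fin k → Bool) → ℝ) η := by
  classical
  by_cases h : η = Fin.init ω
  · subst h
    have key : ∀ σ : Bool, (Fin.snoc (Fin.init ω) σ = ω) ↔ σ = ω (Fin.last k) := by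
      intro σ
      constructor
      · intro hs
        rw [← hs, Fin.snoc_last]
      · rintro rfl
        exact Fin.snoc_init_self ω
    simp only [Pi.single_apply]
    simp_rw [key]
    simp
  · have key : ∀ σ : Bool, Fin.snoc η σ ≠ ω := by
      intro σ hs
      exact h (by rw [← hs, Fin.init_snoc])
    simp [Pi.single_apply, key, Ne.symm h]

lemma cons_sum_single (k : ℕ) (ω : Fin (k + 1) → Bool) (η : Fin k → Bool) :
    ∑ σ : Bool, (Pi.single ω 1 : (Fin (k+1) → Bool) → ℝ) (Fin.cons σ η) =
      (Pi.single (Fin.tail ω) 1 : (Fin k → Bool) → ℝ) η := by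
  classical
  by_cases h : η = Fin.tail ω
  · subst h
    have key : ∀ σ : Bool, (Fin.cons σ (Fin.tail ω) = ω) ↔ σ = ω 0 := by
      intro σ
      constructor
      · intro hs
        rw [← hs, Fin.cons_zero]
      · rintro rfl
        exact Fin.cons_self_tail ω
    simp only [Pi.single_apply]
    simp_rw [key]
    simp
  · have key : ∀ σ : Bool, Fin.cons σ η ≠ ω := by
      intro σ hs
      exact h (by rw [← hs, Fin.tail_cons])
    simp [Pi.single_apply, key, Ne.symm h]

lemma sum_single_one (k : ℕ) (ω : Fin (k+1) → Bool) :
    ∑ η, (Pi.single ω 1 : (Fin (k+1) → Bool) → ℝ) η = 1 := by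
  classical
  simp [Pi.single_apply]

lemma L_single (k : ℕ) (ω : Fin (k + 1) → Bool) :
    Lmap k (Pi.single ω 1 : (Fin (k+1) → Bool) → ℝ) =
      (Pi.single (Fin.init ω) 1 - Pi.single (Fin.tail ω) 1, 1) := by
  refine Prod.ext (funext fun η => ?_) ?_
  · show (∑ σ : Bool, _) - (∑ σ : Bool, _) = _
    rw [snoc_sum_single, cons_sum_single]
    simp
  · exact sum_single_one k ω

/-- the intermediate vertices interpolating from `x` to the all-false word -/
def vtx (k : ℕ) (x : Fin k → Bool) (j : ℕ) : Fin k → Bool :=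
  fun i => if h : (i : ℕ) + j < k then x ⟨(i : ℕ) + j, h⟩ else false

/-- the words whose delta-measures realize consecutive differences -/
def wrd (k : ℕ) (x : Fin k → Bool) (j : ℕ) : Fin (k + 1) → Bool :=
  fun m => if h : (m : ℕ) + j < k then x ⟨(m : ℕ) + j, h⟩ else false

lemma init_wrd (k : ℕ) (x : Fin k → Bool) (j : ℕ) :
    Fin.init (wrd k x j) = vtx k x j := by
  funext i
  simp only [Fin.init, wrd, vtx, Fin.coe_castSucc]

lemma dite_idx (k : ℕ) (x : Fin k → Bool) {n m : ℕ} (h : n = m) :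
    (if h : n < k then x ⟨n, h⟩ else false) = (if h : m < k then x ⟨m, h⟩ else false) := by
  subst h; rfl

lemma tail_wrd (k : ℕ) (x : Fin k → Bool) (j : ℕ) :
    Fin.tail (wrd k x j) = vtx k x (j + 1) := by
  funext i
  simp only [Fin.tail, wrd, vtx, Fin.val_succ]
  exact dite_idx k x (by omega)

lemma vtx_zero (k : ℕ) (x : Fin k → Bool) : vtx k x 0 = x := by
  funext i
  simp [vtx, i.isLt]

lemma vtx_k (k : ℕ) (x : Fin k → Bool) : vtx k x k = fun _ => false := by
  funext i
  simp [vtx]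

lemma const_false_wrd (k : ℕ) :
    Fin.init (fun _ => false : Fin (k+1) → Bool) = (fun _ => false) ∧
    Fin.tail (fun _ => false : Fin (k+1) → Bool) = (fun _ => false) := by
  constructor <;> rfl

lemma L_const_false (k : ℕ) :
    Lmap k (Pi.single (fun _ => false) 1 : (Fin (k+1) → Bool) → ℝ) = (0, 1) := by
  rw [L_single]
  refine Prod.ext ?_ rfl
  show (Pi.single (Fin.init fun _ => false) 1 - Pi.single (Fin.tail fun _ => false) 1 :
    (Fin k → Bool) → ℝ) = 0
  rw [show Fin.init (fun _ => false : Fin (k+1) → Bool) = (fun _ => false) from rfl,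
    show Fin.tail (fun _ => false : Fin (k+1) → Bool) = (fun _ => false) from rfl,
    sub_self]

lemma single_diff_mem (k : ℕ) (x : Fin k → Bool) :
    ((Pi.single x 1 - Pi.single (fun _ => false) 1 : (Fin k → Bool) → ℝ), (0:ℝ)) ∈
      LinearMap.range (Lmap k) := by
  classical
  refine ⟨(∑ j ∈ Finset.range k, Pi.single (wrd k x j) 1 : (Fin (k+1) → Bool) → ℝ) -
    (k : ℝ) • (Pi.single (fun _ => false) 1 : (Fin (k+1) → Bool) → ℝ), ?_⟩
  rw [map_sub, map_smul, map_sum]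
  have hsum : ∑ j ∈ Finset.range k, Lmap k (Pi.single (wrd k x j) (1:ℝ)) =
      ((Pi.single x 1 - Pi.single (fun _ => false) 1 : (Fin k → Bool) → ℝ), (k : ℝ)) := by
    have hcongr : ∀ j ∈ Finset.range k, Lmap k (Pi.single (wrd k x j) (1:ℝ)) =
        ((Pi.single (vtx k x j) 1 - Pi.single (vtx k x (j+1)) 1 : (Fin k → Bool) → ℝ),
          (1:ℝ)) := by
      intro j _
      rw [L_single, init_wrd, tail_wrd]
    rw [Finset.sum_congr rfl hcongr]
    refine Prod.ext ?_ ?_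
    · rw [Prod.fst_sum]
      simp only
      rw [Finset.sum_range_sub' (fun j => (Pi.single (vtx k x j) 1 : (Fin k → Bool) → ℝ)),
        vtx_zero, vtx_k]
    · rw [Prod.snd_sum]
      simp
  rw [hsum, L_const_false]
  refine Prod.ext ?_ ?_ <;> simp

noncomputable def Sig (k : ℕ) : (((Fin k → Bool) → ℝ) × ℝ) →ₗ[ℝ] ℝ where
  toFun p := ∑ η, p.1 η
  map_add' p q := by simp [Finset.sum_add_distrib]
  map_smul' c p := by simp [Finset.mul_sum]

lemma zero_one_mem (k : ℕ) :
    ((0 : (Fin k → Bool) → ℝ), (1:ℝ)) ∈ LinearMap.range (Lmap k) :=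
  ⟨Pi.single (fun _ => false) 1, L_const_false k⟩

lemma range_Lmap (k : ℕ) : LinearMap.range (Lmap k) = LinearMap.ker (Sig k) := by
  apply le_antisymm
  · rintro _ ⟨ν, rfl⟩
    show Sig k (Lmap k ν) = 0
    show ∑ η : Fin k → Bool,
      ((∑ σ : Bool, ν (Fin.snoc η σ)) - ∑ σ : Bool, ν (Fin.cons σ η)) = 0
    rw [Finset.sum_sub_distrib, sum_snoc, sum_cons, sub_self]
  · rintro ⟨f, t⟩ hft
    have hf : ∑ η, f η = 0 := hft
    have hdecomp : ((f, t) : ((Fin k → Bool) → ℝ) × ℝ) =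
        (∑ x : Fin k → Bool, f x •
          (((Pi.single x 1 - Pi.single (fun _ => false) 1 : (Fin k → Bool) → ℝ), (0:ℝ)))) +
        t • (((0 : (Fin k → Bool) → ℝ), (1:ℝ))) := by
      refine Prod.ext ?_ ?_
      · rw [Prod.fst_add, Prod.fst_sum]
        simp only [Prod.smul_mk, smul_zero, add_zero]
        have : ∑ x : Fin k → Bool, f x •
            ((Pi.single x 1 - Pi.single (fun _ => false) 1 : (Fin k → Bool) → ℝ)) =
            (∑ x : Fin k → Bool, f x • (Pi.single x 1 : (Fin k → Bool) → ℝ)) -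
            (∑ x : Fin k → Bool, f x) • (Pi.single (fun _ => false) 1 : (Fin k → Bool) → ℝ) := by
          rw [Finset.sum_smul]
          rw [← Finset.sum_sub_distrib]
          exact Finset.sum_congr rfl fun x _ => smul_sub _ _ _
        rw [this, hf, zero_smul, sub_zero]
        funext y
        simp [Pi.single_apply]
      · rw [Prod.snd_add, Prod.snd_sum]
        simp
    rw [hdecomp]
    exact add_mem (Submodule.sum_mem _ fun x _ => Submodule.smul_mem _ _ (single_diff_mem k x))
      (Submodule.smul_mem _ _ (zero_one_mem k))

lemma finrank_ker_Lmap (k : ℕ) :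
    Module.finrank ℝ (LinearMap.ker (Lmap k)) = 2 ^ k := by
  have hsurj : LinearMap.range (Sig k) = ⊤ := by
    rw [eq_top_iff]
    intro c _
    refine ⟨((Pi.single (fun _ => false) c : (Fin k → Bool) → ℝ), 0), ?_⟩
    show ∑ η, (Pi.single (fun _ => false) c : (Fin k → Bool) → ℝ) η = c
    classical
    simp [Pi.single_apply]
  have hcard : Module.finrank ℝ (((Fin k → Bool) → ℝ) × ℝ) = 2 ^ k + 1 := by
    rw [Module.finrank_prod, Module.finrank_self, Module.finrank_pi]
    simp [Fintype.card_fun]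
  have hker : Module.finrank ℝ (LinearMap.ker (Sig k)) = 2 ^ k := by
    have := LinearMap.finrank_range_add_finrank_ker (Sig k)
    rw [hsurj, finrank_top, Module.finrank_self, hcard] at this
    omega
  have hdom : Module.finrank ℝ ((Fin (k+1) → Bool) → ℝ) = 2 ^ (k + 1) := by
    rw [Module.finrank_pi]
    simp [Fintype.card_fun]
  have := LinearMap.finrank_range_add_finrank_ker (Lmap k)
  rw [range_Lmap, hker, hdom] at this
  have h2 : (2:ℕ) ^ (k+1) = 2 ^ k * 2 := pow_succ 2 k
  omega

lemma L_of_mem (k : ℕ) (ν : (Fin (k+1) → Bool) → ℝ) (h1 : (∑ η, ν η) = 1)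
    (h2 : IsLTI k ν) : Lmap k ν = (0, 1) := by
  refine Prod.ext (funext fun η => ?_) h1
  show (∑ σ : Bool, ν (Fin.snoc η σ)) - ∑ σ : Bool, ν (Fin.cons σ η) = 0
  rw [h2 η, sub_self]

lemma vspan (k : ℕ) :
    vectorSpan ℝ {ν : (Fin (k + 1) → Bool) → ℝ |
        (∀ η, 0 ≤ ν η) ∧ (∑ η, ν η) = 1 ∧ IsLTI k ν} = LinearMap.ker (Lmap k) := by
  apply le_antisymm
  · rw [vectorSpan_def]
    rw [Submodule.span_le]
    intro v hv
    rw [Set.mem_vsub] at hv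
    obtain ⟨a, ha, b, hb, rfl⟩ := hv
    show Lmap k (a -ᵥ b) = 0
    rw [vsub_eq_sub, map_sub, L_of_mem k a ha.2.1 ha.2.2, L_of_mem k b hb.2.1 hb.2.2, sub_self]
  · intro w hw
    have h0 : Lmap k w = 0 := LinearMap.mem_ker.mp hw
    have hw1 : ∀ η : Fin k → Bool,
        (∑ σ : Bool, w (Fin.snoc η σ)) = ∑ σ : Bool, w (Fin.cons σ η) := by
      intro η
      have := congrFun (congrArg Prod.fst h0) η
      exact sub_eq_zero.mp this
    have hw2 : (∑ η, w η) = 0 := congrArg Prod.snd h0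
    set u0 : ℝ := ((2:ℝ)^(k+1))⁻¹ with hu0def
    have hu0 : 0 < u0 := by positivity
    set M : ℝ := ∑ η, |w η| with hMdef
    have hM : 0 ≤ M := Finset.sum_nonneg fun _ _ => abs_nonneg _
    set ε : ℝ := u0 / (M + 1) with hεdef
    have hε : 0 < ε := by positivity
    have hεM : ε * (M + 1) = u0 := div_mul_cancel₀ _ (by linarith)
    set u : (Fin (k+1) → Bool) → ℝ := fun _ => u0 with hudef
    have husum : (∑ η, u η) = 1 := by
      rw [hudef]
      rw [Finset.sum_const, Finset.card_univ, nsmul_eq_mul]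
      rw [Fintype.card_fun]
      simp only [Fintype.card_bool, Fintype.card_fin, hu0def]
      rw [Nat.cast_pow, Nat.cast_ofNat]
      exact mul_inv_cancel₀ (by positivity)
    have hu : u ∈ {ν : (Fin (k + 1) → Bool) → ℝ |
        (∀ η, 0 ≤ ν η) ∧ (∑ η, ν η) = 1 ∧ IsLTI k ν} :=
      ⟨fun _ => hu0.le, husum, fun _ => rfl⟩
    have hu' : u + ε • w ∈ {ν : (Fin (k + 1) → Bool) → ℝ |
        (∀ η, 0 ≤ ν η) ∧ (∑ η, ν η) = 1 ∧ IsLTI k ν} := by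
      refine ⟨?_, ?_, ?_⟩
      · intro η
        have habs : |w η| ≤ M :=
          Finset.single_le_sum (f := fun η => |w η|) (fun _ _ => abs_nonneg _)
            (Finset.mem_univ η)
        have := abs_le.mp habs
        show 0 ≤ u η + ε • w η
        simp only [hudef, smul_eq_mul]
        nlinarith
      · simp only [Pi.add_apply, Pi.smul_apply, smul_eq_mul]
        rw [Finset.sum_add_distrib, husum]
        rw [← Finset.mul_sum, hw2, mul_zero, add_zero]
      · intro η
        simp only [Pi.add_apply, Pi.smul_apply, smul_eq_mul]
        rw [Finset.sum_add_distrib, Finset.sum_add_distrib, ← Finset.mul_sum, ← Finset.mul_sum,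
          hw1 η]
    have hmem := vsub_mem_vectorSpan ℝ hu' hu
    rw [vsub_eq_sub, add_sub_cancel_left] at hmem
    have := Submodule.smul_mem _ ε⁻¹ hmem
    rwa [smul_smul, inv_mul_cancel₀ hε.ne', one_smul] at this


/-- The polytope `M_k` of LTI probability measures on `{0,1}^{k+1}`, sitting inside
`ℝ^{2^{k+1}}`, has affine hull of dimension `2^k`. -/
theorem stmt12 (k : ℕ) (hk : 1 ≤ k) :
    Module.finrank ℝ
      (affineSpan ℝ
        {ν : (Fin (k + 1) → Bool) → ℝ |
          (∀ η, 0 ≤ ν η) ∧ (∑ η, ν η) = 1 ∧ IsLTI k ν}).direction = 2 ^ k := by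
  rw [direction_affineSpan, vspan k, finrank_ker_Lmap]
end

section
/- Every locally translation invariant probability measure μ_k on {0,1}^{k+1} can be written as a convex combination of at most 2^k + 1 of the extreme measures π_k ν_C (C a cycle in the de Bruijn graph G_k). -/
namespace Stmt13

open Finset

variable {k : ℕ}

/-- successor relation in the de Bruijn graph -/
def Succ (k : ℕ) (θ θ' : Fin k → Bool) : Prop :=
  ∀ j : ℕ, ∀ h : j + 1 < k, θ ⟨j + 1, h⟩ = θ' ⟨j, by omega⟩

lemma snoc_eq_iff {θ : Fin k → Bool} {σ : Bool} {e : Fin (k + 1) → Bool} :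
    Fin.snoc θ σ = e ↔ θ = Fin.init e ∧ σ = e (Fin.last k) := by
  constructor
  · rintro rfl
    exact ⟨by simp, by simp⟩
  · rintro ⟨rfl, rfl⟩
    exact Fin.snoc_init_self e

lemma cons_eq_iff {θ : Fin k → Bool} {σ : Bool} {e : Fin (k + 1) → Bool} :
    Fin.cons σ θ = e ↔ σ = e 0 ∧ θ = Fin.tail e := by
  constructor
  · rintro rfl
    exact ⟨by simp, by simp⟩
  · rintro ⟨rfl, rfl⟩
    exact Fin.cons_self_tail e

lemma sum_ind_snoc (θ : Fin k → Bool) (e : Fin (k + 1) → Bool) :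
    (∑ σ : Bool, if Fin.snoc θ σ = e then (1 : ℝ) else 0)
      = if θ = Fin.init e then 1 else 0 := by
  simp only [snoc_eq_iff]
  by_cases h : θ = Fin.init e <;> simp [h]

lemma sum_ind_cons (θ : Fin k → Bool) (e : Fin (k + 1) → Bool) :
    (∑ σ : Bool, if Fin.cons σ θ = e then (1 : ℝ) else 0)
      = if θ = Fin.tail e then 1 else 0 := by
  simp only [cons_eq_iff]
  by_cases h : θ = Fin.tail e <;> simp [h, and_comm]

lemma init_cons {θ θ' : Fin k → Bool} (hk : 0 < k) (h : Succ k θ θ') :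
    Fin.init (Fin.cons (θ ⟨0, hk⟩) θ' : Fin (k + 1) → Bool) = θ := by
  funext j
  rcases j with ⟨jv, hj⟩
  cases jv with
  | zero =>
    show (Fin.cons (θ ⟨0, hk⟩) θ' : Fin (k + 1) → Bool) (Fin.castSucc ⟨0, hj⟩) = θ ⟨0, hj⟩
    have h0 : Fin.castSucc (⟨0, hj⟩ : Fin k) = (0 : Fin (k + 1)) := Fin.ext (by simp)
    rw [h0, Fin.cons_zero]
  | succ m =>
    show (Fin.cons (θ ⟨0, hk⟩) θ' : Fin (k + 1) → Bool) (Fin.castSucc ⟨m + 1, hj⟩) = θ ⟨m + 1, hj⟩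
    have h1 : Fin.castSucc (⟨m + 1, hj⟩ : Fin k) = Fin.succ ⟨m, by omega⟩ := Fin.ext (by simp)
    rw [h1, Fin.cons_succ]
    exact (h m hj).symm

lemma cons_init_tail (hk : 0 < k) (e : Fin (k + 1) → Bool) :
    (Fin.cons (Fin.init e ⟨0, hk⟩) (Fin.tail e) : Fin (k + 1) → Bool) = e := by
  have h0 : Fin.init e ⟨0, hk⟩ = e 0 := by
    show e (Fin.castSucc ⟨0, hk⟩) = e 0
    have : Fin.castSucc (⟨0, hk⟩ : Fin k) = (0 : Fin (k + 1)) := Fin.ext (by simp)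
    rw [this]
  rw [h0, Fin.cons_self_tail]

lemma cons_snoc (hk : 0 < k) (θ : Fin k → Bool) (σ : Bool) :
    (Fin.cons (θ ⟨0, hk⟩) (Fin.tail (Fin.snoc θ σ : Fin (k + 1) → Bool)) : Fin (k + 1) → Bool)
      = Fin.snoc θ σ := by
  have h := cons_init_tail hk (Fin.snoc θ σ : Fin (k + 1) → Bool)
  rwa [Fin.init_snoc] at h

lemma succ_init_tail (hk : 0 < k) (e : Fin (k + 1) → Bool) :
    Succ k (Fin.init e) (Fin.tail e) := by
  intro j h
  show e (Fin.castSucc ⟨j + 1, h⟩) = e (Fin.succ ⟨j, by omega⟩)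
  have : Fin.castSucc (⟨j + 1, h⟩ : Fin k) = Fin.succ ⟨j, by omega⟩ := Fin.ext (by simp)
  rw [this]

lemma succ_of_isCycle {p : ℕ} {v : Fin p → (Fin k → Bool)} (hc : IsCycle k p v) (i : Fin p) :
    Succ k (v i) (v (finRotate p i)) := fun j h => hc.2.2 i j h

lemma cycleMeasure_nonneg (hk : 0 < k) {p : ℕ} (v : Fin p → (Fin k → Bool))
    (η : Fin (k + 1) → Bool) : 0 ≤ cycleMeasure k p hk v η := by
  refine mul_nonneg (by positivity) (Finset.sum_nonneg fun i _ => ?_)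
  split <;> norm_num

lemma cycleMeasure_sum (hk : 0 < k) {p : ℕ} (hp : 0 < p) (v : Fin p → (Fin k → Bool)) :
    (∑ η, cycleMeasure k p hk v η) = 1 := by
  unfold cycleMeasure
  rw [← Finset.mul_sum, Finset.sum_comm]
  have hpt : ∀ i : Fin p, (∑ η : Fin (k + 1) → Bool,
      if η = Fin.cons (v i ⟨0, hk⟩) (v (finRotate p i)) then (1 : ℝ) else 0) = 1 := by
    intro i; simp
  simp only [hpt, Finset.sum_const, Finset.card_univ, Fintype.card_fin, nsmul_eq_mul, mul_one]
  field_simp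

lemma cycleMeasure_LTI (hk : 0 < k) {p : ℕ} {v : Fin p → (Fin k → Bool)}
    (hc : IsCycle k p v) : IsLTI k (cycleMeasure k p hk v) := by
  intro η
  unfold cycleMeasure
  rw [← Finset.mul_sum, ← Finset.mul_sum, Finset.sum_comm, Finset.sum_comm (γ := Bool)]
  congr 1
  have hL : ∀ i : Fin p, (∑ σ : Bool,
      if (Fin.snoc η σ : Fin (k+1) → Bool) = Fin.cons (v i ⟨0, hk⟩) (v (finRotate p i)) then (1 : ℝ) else 0)
        = if η = v i then 1 else 0 := by
    intro i
    rw [sum_ind_snoc, init_cons hk (succ_of_isCycle hc i)]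
  have hR : ∀ i : Fin p, (∑ σ : Bool,
      if (Fin.cons σ η : Fin (k+1) → Bool) = Fin.cons (v i ⟨0, hk⟩) (v (finRotate p i)) then (1 : ℝ) else 0)
        = if η = v (finRotate p i) then 1 else 0 := by
    intro i
    rw [sum_ind_cons, Fin.tail_cons]
  simp only [hL, hR]
  exact (Equiv.sum_comp (finRotate p) (fun w : Fin p => if η = v w then (1 : ℝ) else 0)).symm

end Stmt13

namespace Stmt13

open Finset

variable {k : ℕ}

/-- From any starting point, the iterates of a self-map of a finite type contain a
genuine cycle. -/
lemma cycle_of_iterate {α : Type*} [Fintype α] [DecidableEq α] (g : α → α) (x0 : α) :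
    ∃ p', ∃ v : Fin (p' + 1) → α, Function.Injective v ∧
      (∀ m, v (finRotate (p' + 1) m) = g (v m)) ∧ (∀ m, ∃ n, v m = g^[n] x0) := by
  classical
  set u : ℕ → α := fun n => g^[n] x0 with hu
  have hcard : Fintype.card α < Fintype.card (Fin (Fintype.card α + 1)) := by simp
  obtain ⟨a, b, hab, he⟩ :=
    Fintype.exists_ne_map_eq_of_card_lt (fun n : Fin (Fintype.card α + 1) => u n) hcard
  have hexists : ∃ j, ∃ i, i < j ∧ u i = u j := by
    rcases Nat.lt_or_ge a.val b.val with h | h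
    · exact ⟨b, a, h, he⟩
    · have : b.val < a.val := by
        rcases Nat.lt_or_ge b.val a.val with h' | h'
        · exact h'
        · exact absurd (Fin.ext (le_antisymm h' h)) hab
      exact ⟨a, b, this, he.symm⟩
  set j0 := Nat.find hexists with hj0
  obtain ⟨i0, hi0lt, hi0eq⟩ := Nat.find_spec hexists
  have hmin : ∀ j' < j0, ¬ ∃ i, i < j' ∧ u i = u j' := fun j' h => Nat.find_min hexists h
  obtain ⟨p', hp'⟩ : ∃ p', j0 - i0 = p' + 1 := ⟨j0 - i0 - 1, by omega⟩
  have hij : i0 + (p' + 1) = j0 := by omega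
  refine ⟨p', fun m => u (i0 + m.val), ?_, ?_, fun m => ⟨i0 + m.val, rfl⟩⟩
  · -- injectivity
    have key : ∀ s t : Fin (p' + 1), s.val < t.val → u (i0 + s.val) ≠ u (i0 + t.val) := by
      intro s t hst hequ
      have ht : i0 + t.val < j0 := by omega
      exact hmin (i0 + t.val) ht ⟨i0 + s.val, by omega, hequ⟩
    intro s t hst
    by_contra hne
    rcases Nat.lt_or_ge s.val t.val with h | h
    · exact key s t h hst
    · have h' : t.val < s.val := by
        rcases Nat.lt_or_ge t.val s.val with h' | h'
        · exact h'
        · exact absurd (Fin.ext (le_antisymm h h')) (fun he => hne he.symm)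
      exact key t s h' hst.symm
  · -- rotation
    intro m
    rw [finRotate_succ_apply]
    by_cases hm : m = Fin.last p'
    · subst hm
      rw [Fin.last_add_one]
      show u (i0 + 0) = g (u (i0 + p'))
      have h1 : u (i0 + 0) = u j0 := by rw [Nat.add_zero]; exact hi0eq
      have h2 : g (u (i0 + p')) = u (i0 + p' + 1) := by
        rw [hu]; exact (Function.iterate_succ_apply' g (i0 + p') x0).symm
      rw [h1, h2]
      congr 1
      omega
    · show u (i0 + (m + 1).val) = g (u (i0 + m.val))
      rw [Fin.val_add_one, if_neg hm]
      have h2 : g (u (i0 + m.val)) = u (i0 + m.val + 1) := by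
        rw [hu]; exact (Function.iterate_succ_apply' g (i0 + m.val) x0).symm
      rw [h2]
      exact congrArg u (by omega)

/-- Existence of a cycle all of whose edges have positive `μ`-measure. -/
lemma exists_cycle (hk : 0 < k) (μ : (Fin (k + 1) → Bool) → ℝ) (hpos : ∀ η, 0 ≤ μ η)
    (hLTI : IsLTI k μ) {e₀ : Fin (k + 1) → Bool} (he₀ : 0 < μ e₀) :
    ∃ p, ∃ v : Fin p → (Fin k → Bool), IsCycle k p v ∧
      ∀ i, 0 < μ (Fin.cons (v i ⟨0, hk⟩) (v (finRotate p i))) := by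
  classical
  -- the default de Bruijn successor
  set s0 : (Fin k → Bool) → (Fin k → Bool) :=
    fun θ j => if h : (j : ℕ) + 1 < k then θ ⟨(j : ℕ) + 1, h⟩ else false with hs0
  set g : (Fin k → Bool) → (Fin k → Bool) := fun θ =>
    if h : ∃ σ, 0 < μ (Fin.snoc θ σ) then Fin.tail (Fin.snoc θ h.choose : Fin (k+1) → Bool)
    else s0 θ with hg
  have hsucc_tail : ∀ (θ : Fin k → Bool) (σ : Bool),
      Succ k θ (Fin.tail (Fin.snoc θ σ : Fin (k+1) → Bool)) := by
    intro θ σ j hj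
    show θ ⟨j + 1, hj⟩ = (Fin.snoc θ σ : Fin (k+1) → Bool) (Fin.succ ⟨j, by omega⟩)
    have h1 : Fin.succ (⟨j, by omega⟩ : Fin k) = Fin.castSucc ⟨j + 1, hj⟩ := Fin.ext (by simp)
    rw [h1, Fin.snoc_castSucc]
  have hgsucc : ∀ θ, Succ k θ (g θ) := by
    intro θ
    rw [hg]
    by_cases h : ∃ σ, 0 < μ (Fin.snoc θ σ)
    · simp only [dif_pos h]
      exact hsucc_tail θ _
    · simp only [dif_neg h]
      intro j hj
      show θ ⟨j + 1, hj⟩ = if h' : (j : ℕ) + 1 < k then θ ⟨(j : ℕ) + 1, h'⟩ else false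
      rw [dif_pos hj]
  -- out-degree weight
  set out : (Fin k → Bool) → ℝ := fun θ => ∑ σ : Bool, μ (Fin.snoc θ σ) with hout
  have hedge : ∀ θ : Fin k → Bool, 0 < out θ →
      0 < μ (Fin.cons (θ ⟨0, hk⟩) (g θ)) := by
    intro θ hθ
    have hex : ∃ σ, 0 < μ (Fin.snoc θ σ) := by
      by_contra hcon
      push_neg at hcon
      have : out θ ≤ 0 := by
        rw [hout]
        exact Finset.sum_nonpos fun σ _ => hcon σ
      linarith
    have hgθ : g θ = Fin.tail (Fin.snoc (α := fun _ : Fin (k+1) => Bool) θ hex.choose) := by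
      rw [hg]; simp only [dif_pos hex]
    have hcons : Fin.cons (θ ⟨0, hk⟩) (g θ) = Fin.snoc (α := fun _ : Fin (k+1) => Bool) θ hex.choose := by
      rw [hgθ]
      exact cons_snoc hk θ _
    rw [hcons]
    exact hex.choose_spec
  have hstep : ∀ θ : Fin k → Bool, 0 < out θ → 0 < out (g θ) := by
    intro θ hθ
    have h1 : 0 < μ (Fin.cons (θ ⟨0, hk⟩) (g θ)) := hedge θ hθ
    have h2 : μ (Fin.cons (θ ⟨0, hk⟩) (g θ)) ≤ ∑ σ : Bool, μ (Fin.cons σ (g θ)) := by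
      have := Finset.single_le_sum (f := fun σ : Bool => μ (Fin.cons σ (g θ)))
        (fun σ _ => hpos _) (Finset.mem_univ (θ ⟨0, hk⟩))
      exact this
    have h3 : out (g θ) = ∑ σ : Bool, μ (Fin.cons σ (g θ)) := hLTI (g θ)
    rw [h3]
    linarith
  -- starting point
  set x0 : Fin k → Bool := Fin.init e₀ with hx0
  have hx0pos : 0 < out x0 := by
    have h1 : μ e₀ ≤ out x0 := by
      have h2 : e₀ = Fin.snoc x0 (e₀ (Fin.last k)) := (Fin.snoc_init_self e₀).symm
      rw [hout]
      calc μ e₀ = μ (Fin.snoc x0 (e₀ (Fin.last k))) := by rw [← h2]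
        _ ≤ _ := Finset.single_le_sum (f := fun σ : Bool => μ (Fin.snoc x0 σ))
            (fun σ _ => hpos _) (Finset.mem_univ _)
    linarith
  have hiter : ∀ n, 0 < out (g^[n] x0) := by
    intro n
    induction n with
    | zero => exact hx0pos
    | succ n ih =>
      rw [Function.iterate_succ_apply']
      exact hstep _ ih
  obtain ⟨p', v, hinj, hrot, hin⟩ := cycle_of_iterate g x0
  refine ⟨p' + 1, v, ⟨Nat.succ_pos p', hinj, ?_⟩, ?_⟩
  · intro i j hj
    have := hgsucc (v i) j hj
    rw [← hrot i] at this
    exact this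
  · intro i
    obtain ⟨n, hn⟩ := hin i
    have hov : 0 < out (v i) := by rw [hn]; exact hiter n
    have := hedge (v i) hov
    rw [← hrot i] at this
    exact this

end Stmt13

namespace Stmt13

open Finset

variable {k : ℕ}

lemma decomp_zero (hk : 0 < k) (μ : (Fin (k + 1) → Bool) → ℝ) (h0 : ∀ η, μ η = 0) :
    ∃ (n : ℕ) (p : Fin n → ℕ) (v : ∀ m : Fin n, Fin (p m) → (Fin k → Bool)) (β : Fin n → ℝ),
      (∀ m, IsCycle k (p m) (v m)) ∧ (∀ m, 0 ≤ β m) ∧ (∑ m, β m) = (∑ η, μ η) ∧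
      ∀ η, μ η = ∑ m, β m * cycleMeasure k (p m) hk (v m) η := by
  refine ⟨0, fun _ => 0, fun m => m.elim0, fun _ => 0, fun m => m.elim0,
    fun _ => le_refl 0, ?_, ?_⟩
  · simp [h0]
  · intro η; rw [h0 η]; simp

lemma decomp (hk : 0 < k) : ∀ (N : ℕ) (μ : (Fin (k + 1) → Bool) → ℝ),
    (Finset.univ.filter fun η => μ η ≠ 0).card ≤ N → (∀ η, 0 ≤ μ η) → IsLTI k μ →
    ∃ (n : ℕ) (p : Fin n → ℕ) (v : ∀ m : Fin n, Fin (p m) → (Fin k → Bool)) (β : Fin n → ℝ),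
      (∀ m, IsCycle k (p m) (v m)) ∧ (∀ m, 0 ≤ β m) ∧ (∑ m, β m) = (∑ η, μ η) ∧
      ∀ η, μ η = ∑ m, β m * cycleMeasure k (p m) hk (v m) η := by
  classical
  intro N
  induction N with
  | zero =>
    intro μ hcard hpos hLTI
    refine decomp_zero hk μ ?_
    intro η
    by_contra hne
    have hmem : η ∈ Finset.univ.filter fun η => μ η ≠ 0 := by simp [hne]
    have := Finset.card_pos.mpr ⟨η, hmem⟩
    omega
  | succ N ih =>
    intro μ hcard hpos hLTI
    by_cases hne : ∃ e, 0 < μ e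
    swap
    · refine decomp_zero hk μ fun η => le_antisymm ?_ (hpos η)
      push_neg at hne; exact hne η
    obtain ⟨e₀, he₀⟩ := hne
    obtain ⟨p, v, hcyc, hedge⟩ := exists_cycle hk μ hpos hLTI he₀
    have hp : 0 < p := hcyc.1
    set E : Fin p → (Fin (k + 1) → Bool) :=
      fun i => Fin.cons (v i ⟨0, hk⟩) (v (finRotate p i)) with hE
    have hEinj : Function.Injective E := by
      intro i j hij
      have h1 : Fin.init (E i) = v i := init_cons hk (succ_of_isCycle hcyc i)
      have h2 : Fin.init (E j) = v j := init_cons hk (succ_of_isCycle hcyc j)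
      apply hcyc.2.1
      rw [← h1, ← h2, hij]
    have hne' : (Finset.univ : Finset (Fin p)).Nonempty := ⟨⟨0, hp⟩, Finset.mem_univ _⟩
    set ε : ℝ := Finset.univ.inf' hne' fun i => μ (E i) with hε
    have hεpos : 0 < ε := by
      rw [hε, Finset.lt_inf'_iff]
      intro i _
      exact hedge i
    obtain ⟨i₀, -, hi₀⟩ := Finset.exists_mem_eq_inf' hne' fun i => μ (E i)
    have hεle : ∀ i, ε ≤ μ (E i) := fun i => Finset.inf'_le _ (Finset.mem_univ i)
    have hcm : ∀ η, cycleMeasure k p hk v η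
        = (p : ℝ)⁻¹ * ∑ i, if η = E i then 1 else 0 := fun η => rfl
    have hcmE : ∀ i, cycleMeasure k p hk v (E i) = (p : ℝ)⁻¹ := by
      intro i
      rw [hcm]
      have hii : ∀ j : Fin p, (if E i = E j then (1 : ℝ) else 0) = if i = j then 1 else 0 := by
        intro j
        by_cases h : i = j
        · simp [h]
        · rw [if_neg (fun hc => h (hEinj hc)), if_neg h]
      simp only [hii]
      rw [Finset.sum_ite_eq]
      simp
    have hcm0 : ∀ η, (¬ ∃ i, η = E i) → cycleMeasure k p hk v η = 0 := by
      intro η hη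
      rw [hcm]
      have hz : ∀ j : Fin p, (if η = E j then (1 : ℝ) else 0) = 0 := by
        intro j; rw [if_neg fun hc => hη ⟨j, hc⟩]
      simp [hz]
    set c : ℝ := ε * p with hc
    have hcpos : 0 < c := mul_pos hεpos (by exact_mod_cast hp)
    set μ' : (Fin (k + 1) → Bool) → ℝ :=
      fun η => μ η - c * cycleMeasure k p hk v η with hμ'
    have hccm : ∀ i, c * cycleMeasure k p hk v (E i) = ε := by
      intro i
      rw [hcmE, hc]
      have : (p : ℝ) ≠ 0 := by exact_mod_cast hp.ne'
      field_simp
    have hμ'pos : ∀ η, 0 ≤ μ' η := by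
      intro η
      simp only [hμ']
      by_cases hη : ∃ i, η = E i
      · obtain ⟨i, rfl⟩ := hη
        rw [hccm i]
        linarith [hεle i]
      · rw [hcm0 η hη]
        simp [hpos η]
    have hμ'LTI : IsLTI k μ' := by
      intro η
      have h1 := hLTI η
      have h2 := cycleMeasure_LTI hk hcyc η
      simp only [hμ']
      rw [Finset.sum_sub_distrib, Finset.sum_sub_distrib, h1,
        ← Finset.mul_sum, ← Finset.mul_sum, h2]
    have hμ'i₀ : μ' (E i₀) = 0 := by
      simp only [hμ']
      rw [hccm i₀, ← hi₀]
      ring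
    have hsub : (Finset.univ.filter fun η => μ' η ≠ 0)
        ⊆ (Finset.univ.filter fun η => μ η ≠ 0).erase (E i₀) := by
      intro η hη
      simp only [Finset.mem_filter, Finset.mem_univ, true_and] at hη
      rw [Finset.mem_erase]
      constructor
      · intro hc'; rw [hc'] at hη; exact hη hμ'i₀
      · simp only [Finset.mem_filter, Finset.mem_univ, true_and]
        by_cases hη2 : ∃ i, η = E i
        · obtain ⟨i, rfl⟩ := hη2
          have h5 := hεle i
          intro h0; rw [h0] at h5; linarith
        · intro h0
          apply hη
          simp only [hμ']
          rw [hcm0 η hη2, h0]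
          ring
    have hcard' : (Finset.univ.filter fun η => μ' η ≠ 0).card ≤ N := by
      have h1 := Finset.card_le_card hsub
      have h2 : E i₀ ∈ Finset.univ.filter fun η => μ η ≠ 0 := by
        simp only [Finset.mem_filter, Finset.mem_univ, true_and]
        have h5 := hεle i₀
        intro h0; rw [h0] at h5; linarith
      have h3 := Finset.card_erase_of_mem h2
      omega
    obtain ⟨n', P', V', B', hc1, hc2, hc3, hc4⟩ := ih μ' hcard' hμ'pos hμ'LTI
    refine ⟨n' + 1, Fin.cases p P',
      fun m => Fin.cases (motive := fun m => Fin (Fin.cases (motive := fun _ => ℕ) p P' m) → (Fin k → Bool)) v V' m,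
      Fin.cases c B', ?_, ?_, ?_, ?_⟩
    · intro m
      induction m using Fin.cases with
      | zero => exact hcyc
      | succ m => exact hc1 m
    · intro m
      induction m using Fin.cases with
      | zero => exact le_of_lt hcpos
      | succ m => exact hc2 m
    · rw [Fin.sum_univ_succ]
      show c + (∑ m : Fin n', B' m) = ∑ η, μ η
      rw [hc3]
      have hs : (∑ η, μ' η) = (∑ η, μ η) - c := by
        simp only [hμ']
        rw [Finset.sum_sub_distrib, ← Finset.mul_sum, cycleMeasure_sum hk hp]
        ring
      rw [hs]; ring
    · intro η
      rw [Fin.sum_univ_succ]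
      show μ η = c * cycleMeasure k p hk v η
        + ∑ m : Fin n', B' m * cycleMeasure k (P' m) hk (V' m) η
      have h4 := hc4 η
      simp only [hμ'] at h4
      linarith [h4]

end Stmt13

namespace Stmt13

open Finset Module

variable {k : ℕ}

noncomputable def sumL (k : ℕ) : ((Fin (k + 1) → Bool) → ℝ) →ₗ[ℝ] ℝ :=
  ∑ e : Fin (k + 1) → Bool, LinearMap.proj e

noncomputable def sumV (k : ℕ) : ((Fin k → Bool) → ℝ) →ₗ[ℝ] ℝ :=
  ∑ θ : Fin k → Bool, LinearMap.proj θ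

lemma sumL_apply (μ : (Fin (k + 1) → Bool) → ℝ) : sumL k μ = ∑ e, μ e := by
  simp [sumL]

lemma sumV_apply (f : (Fin k → Bool) → ℝ) : sumV k f = ∑ θ, f θ := by
  simp [sumV]

noncomputable def flowL (k : ℕ) : ((Fin (k + 1) → Bool) → ℝ) →ₗ[ℝ] ((Fin k → Bool) → ℝ) :=
  LinearMap.pi fun θ =>
    (∑ σ : Bool, LinearMap.proj (R := ℝ) (φ := fun _ : Fin (k+1) → Bool => ℝ)
        (Fin.snoc θ σ : Fin (k + 1) → Bool))
      - ∑ σ : Bool, LinearMap.proj (R := ℝ) (φ := fun _ : Fin (k+1) → Bool => ℝ)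
        (Fin.cons σ θ : Fin (k + 1) → Bool)

lemma flowL_apply (μ : (Fin (k + 1) → Bool) → ℝ) (θ : Fin k → Bool) :
    flowL k μ θ = (∑ σ : Bool, μ (Fin.snoc θ σ)) - ∑ σ : Bool, μ (Fin.cons σ θ) := by
  simp [flowL]

lemma flowL_eq_zero_of_LTI {μ : (Fin (k + 1) → Bool) → ℝ} (h : IsLTI k μ) :
    flowL k μ = 0 := by
  funext θ
  rw [flowL_apply, h θ]
  simp

/-- delta measure on the vertex space -/
noncomputable def dA (k : ℕ) (θ : Fin k → Bool) : (Fin k → Bool) → ℝ := Pi.single θ 1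

/-- delta measure on the edge space -/
noncomputable def dE (k : ℕ) (e : Fin (k + 1) → Bool) : (Fin (k + 1) → Bool) → ℝ :=
  Pi.single e 1

/-- all-false vertex -/
def botV (k : ℕ) : Fin k → Bool := fun _ => false

lemma dA_apply (θ x : Fin k → Bool) : dA k θ x = if x = θ then 1 else 0 :=
  Pi.single_apply θ 1 x

lemma dE_apply (e x : Fin (k + 1) → Bool) : dE k e x = if x = e then 1 else 0 :=
  Pi.single_apply e 1 x

lemma flowL_single (e : Fin (k + 1) → Bool) :
    flowL k (dE k e) = dA k (Fin.init e) - dA k (Fin.tail e) := by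
  classical
  funext θ
  rw [flowL_apply]
  simp only [dE_apply, sum_ind_snoc, sum_ind_cons]
  simp [dA_apply]

def shift0 (k : ℕ) (θ : Fin k → Bool) : Fin k → Bool :=
  fun j => if h : (j : ℕ) + 1 < k then θ ⟨(j : ℕ) + 1, h⟩ else false

lemma tail_snoc_false (θ : Fin k → Bool) :
    Fin.tail (Fin.snoc θ false : Fin (k + 1) → Bool) = shift0 k θ := by
  funext j
  show (Fin.snoc θ false : Fin (k + 1) → Bool) (Fin.succ j) = _
  by_cases h : (j : ℕ) + 1 < k
  · have hs : Fin.succ j = Fin.castSucc ⟨(j : ℕ) + 1, h⟩ := Fin.ext (by simp)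
    rw [hs, Fin.snoc_castSucc]
    show θ ⟨(j : ℕ) + 1, h⟩ = if h' : (j : ℕ) + 1 < k then θ ⟨(j : ℕ) + 1, h'⟩ else false
    rw [dif_pos h]
  · have hj : (j : ℕ) + 1 = k := by have := j.isLt; omega
    have hs : Fin.succ j = Fin.last k := Fin.ext (by simp [hj])
    rw [hs, Fin.snoc_last]
    show false = if h' : (j : ℕ) + 1 < k then θ ⟨(j : ℕ) + 1, h'⟩ else false
    rw [dif_neg h]

lemma shift0_iterate (m : ℕ) (θ : Fin k → Bool) (j : Fin k) :
    (shift0 k)^[m] θ j = if h : (j : ℕ) + m < k then θ ⟨(j : ℕ) + m, h⟩ else false := by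
  induction m generalizing θ with
  | zero =>
    simp only [Function.iterate_zero, id_eq]
    rw [dif_pos (show (j : ℕ) + 0 < k by omega)]
    exact congrArg θ (Fin.ext (by simp))
  | succ m ihm =>
    rw [Function.iterate_succ_apply, ihm (shift0 k θ)]
    by_cases h : (j : ℕ) + m < k
    · rw [dif_pos h]
      show (if h' : (j : ℕ) + m + 1 < k then θ ⟨(j : ℕ) + m + 1, h'⟩ else false) = _
      by_cases h2 : (j : ℕ) + m + 1 < k
      · rw [dif_pos h2, dif_pos (show (j : ℕ) + (m + 1) < k by omega)]
        exact congrArg θ (Fin.ext (by simp [Nat.add_assoc]))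
      · rw [dif_neg h2, dif_neg (show ¬ ((j : ℕ) + (m + 1) < k) by omega)]
    · rw [dif_neg h, dif_neg (show ¬ ((j : ℕ) + (m + 1) < k) by omega)]

lemma shift0_iterate_k (θ : Fin k → Bool) : (shift0 k)^[k] θ = botV k := by
  funext j
  rw [shift0_iterate]
  rw [dif_neg (show ¬ ((j : ℕ) + k < k) by omega)]
  rfl

lemma single_sub_single_shift_mem (θ : Fin k → Bool) :
    dA k θ - dA k (shift0 k θ) ∈ LinearMap.range (flowL k) := by
  classical
  refine ⟨dE k (Fin.snoc θ false : Fin (k + 1) → Bool), ?_⟩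
  rw [flowL_single, Fin.init_snoc, tail_snoc_false]

lemma single_sub_bot_mem (θ : Fin k → Bool) :
    dA k θ - dA k (botV k) ∈ LinearMap.range (flowL k) := by
  classical
  have key : ∀ m (θ : Fin k → Bool),
      dA k θ - dA k ((shift0 k)^[m] θ) ∈ LinearMap.range (flowL k) := by
    intro m
    induction m with
    | zero => intro θ; simp
    | succ m ihm =>
      intro θ
      have h1 := ihm θ
      have h2 := single_sub_single_shift_mem ((shift0 k)^[m] θ)
      have heq : dA k θ - dA k ((shift0 k)^[m + 1] θ)
          = (dA k θ - dA k ((shift0 k)^[m] θ))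
            + (dA k ((shift0 k)^[m] θ) - dA k (shift0 k ((shift0 k)^[m] θ))) := by
        rw [Function.iterate_succ_apply']
        ring
      rw [heq]
      exact Submodule.add_mem _ h1 h2
  have h := key k θ
  rwa [shift0_iterate_k] at h

lemma mem_range_flow {f : (Fin k → Bool) → ℝ} (hf : (∑ θ, f θ) = 0) :
    f ∈ LinearMap.range (flowL k) := by
  classical
  have hrepr : f = ∑ θ, f θ • (dA k θ - dA k (botV k)) := by
    funext x
    rw [Finset.sum_apply]
    have hterm : ∀ θ, (f θ • (dA k θ - dA k (botV k))) x
        = f θ * (if x = θ then 1 else 0) - f θ * (if x = botV k then 1 else 0) := by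
      intro θ
      simp [dA_apply, mul_sub]
    simp only [hterm]
    rw [Finset.sum_sub_distrib]
    have h1 : (∑ θ, f θ * (if x = θ then (1 : ℝ) else 0)) = f x := by
      simp [mul_ite, Finset.sum_ite_eq]
    have h2 : (∑ θ : Fin k → Bool, f θ * (if x = botV k then (1 : ℝ) else 0)) = 0 := by
      rw [← Finset.sum_mul, hf, zero_mul]
    rw [h1, h2]
    ring
  rw [hrepr]
  exact Submodule.sum_mem _ fun θ _ => Submodule.smul_mem _ _ (single_sub_bot_mem θ)

/-- the combined linear map whose kernel contains differences of LTI probability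
measures. -/
noncomputable def Mmap (k : ℕ) :
    ((Fin (k + 1) → Bool) → ℝ) →ₗ[ℝ] ((Fin k → Bool) → ℝ) × ℝ :=
  (flowL k).prod (sumL k)

/-- all-false edge -/
def botE (k : ℕ) : Fin (k + 1) → Bool := fun _ => false

lemma flowL_bot_single : flowL k (dE k (botE k)) = 0 := by
  classical
  rw [flowL_single]
  have h1 : Fin.init (botE k) = botV k := rfl
  have h2 : Fin.tail (botE k) = botV k := rfl
  rw [h1, h2, sub_self]

lemma sumL_bot_single : sumL k (dE k (botE k)) = 1 := by
  classical
  rw [sumL_apply]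
  simp [dE_apply, Finset.sum_ite_eq]

lemma ker_le_range (x : ((Fin k → Bool) → ℝ) × ℝ) (hx : sumV k x.1 = 0) :
    x ∈ LinearMap.range (Mmap k) := by
  classical
  rw [sumV_apply] at hx
  obtain ⟨μ0, hμ0⟩ := mem_range_flow hx
  refine ⟨μ0 + (x.2 - sumL k μ0) • dE k (botE k), ?_⟩
  have h1 : (Mmap k) (μ0 + (x.2 - sumL k μ0) • dE k (botE k))
      = (flowL k μ0 + (x.2 - sumL k μ0) • flowL k (dE k (botE k)),
         sumL k μ0 + (x.2 - sumL k μ0) * sumL k (dE k (botE k))) := by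
    simp [Mmap, LinearMap.prod_apply, map_add, map_smul, smul_eq_mul]
  rw [h1, flowL_bot_single, sumL_bot_single, hμ0]
  ext
  · simp
  · simp

lemma finrank_ker_Mmap : finrank ℝ (LinearMap.ker (Mmap k)) ≤ 2 ^ k := by
  classical
  have hE : finrank ℝ ((Fin (k + 1) → Bool) → ℝ) = 2 ^ (k + 1) := by
    rw [Module.finrank_pi, Fintype.card_fun]
    simp
  set G : (((Fin k → Bool) → ℝ) × ℝ) →ₗ[ℝ] ℝ :=
    (sumV k).comp (LinearMap.fst ℝ ((Fin k → Bool) → ℝ) ℝ) with hG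
  have hGsurj : Function.Surjective G := by
    intro t
    refine ⟨(t • dA k (botV k), 0), ?_⟩
    rw [hG]
    simp only [LinearMap.comp_apply, LinearMap.fst_apply]
    rw [sumV_apply]
    simp [dA_apply, mul_ite, Finset.sum_ite_eq]
  have hrangeG : LinearMap.range G = ⊤ := LinearMap.range_eq_top.mpr hGsurj
  have hdim : finrank ℝ (((Fin k → Bool) → ℝ) × ℝ) = 2 ^ k + 1 := by
    rw [Module.finrank_prod, Module.finrank_pi, Module.finrank_self, Fintype.card_fun]
    simp
  have hkerG : finrank ℝ (LinearMap.ker G) = 2 ^ k := by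
    have hrn := LinearMap.finrank_range_add_finrank_ker G
    rw [hrangeG, finrank_top, Module.finrank_self, hdim] at hrn
    omega
  have hle : LinearMap.ker G ≤ LinearMap.range (Mmap k) := by
    intro x hx
    rw [LinearMap.mem_ker, hG] at hx
    exact ker_le_range x hx
  have hmono := Submodule.finrank_mono hle
  have hrnM := LinearMap.finrank_range_add_finrank_ker (Mmap k)
  rw [hE] at hrnM
  have h2 : (2 : ℕ) ^ (k + 1) = 2 ^ k + 2 ^ k := by ring
  omega

end Stmt13

/-- Every LTI probability measure on `{0,1}^{k+1}` is a convex combination of at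
most `2^k + 1` of the extreme cycle measures `π_k ν_C`. -/
theorem stmt13 (k : ℕ) (hk : 0 < k) (μ : (Fin (k + 1) → Bool) → ℝ)
    (hpos : ∀ η, 0 ≤ μ η) (hsum : (∑ η, μ η) = 1) (hLTI : IsLTI k μ) :
    ∃ (n : ℕ), n ≤ 2 ^ k + 1 ∧
      ∃ (p : Fin n → ℕ) (v : ∀ m : Fin n, Fin (p m) → (Fin k → Bool)) (β : Fin n → ℝ),
        (∀ m, IsCycle k (p m) (v m)) ∧ (∀ m, 0 ≤ β m) ∧ (∑ m, β m) = 1 ∧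
          ∀ η, μ η = ∑ m, β m * cycleMeasure k (p m) hk (v m) η := by
  classical
  obtain ⟨n0, p0, v0, β0, hcyc0, hβ0, hsum0, hrep0⟩ :=
    Stmt13.decomp hk ((Finset.univ.filter fun η => μ η ≠ 0).card) μ le_rfl hpos hLTI
  rw [hsum] at hsum0
  -- μ lies in the convex hull of the cycle measures
  set S : Set ((Fin (k + 1) → Bool) → ℝ) :=
    {c | ∃ p, ∃ v : Fin p → (Fin k → Bool), IsCycle k p v ∧ c = cycleMeasure k p hk v} with hS
  have hμS : μ ∈ convexHull ℝ S := by
    have hcm : μ = (Finset.univ : Finset (Fin n0)).centerMass β0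
        (fun m => cycleMeasure k (p0 m) hk (v0 m)) := by
      rw [Finset.centerMass_eq_of_sum_1 _ _ hsum0]
      funext η
      rw [hrep0 η, Finset.sum_apply]
      simp
    rw [hcm]
    refine Finset.centerMass_mem_convexHull _ (fun i _ => hβ0 i) (by rw [hsum0]; norm_num)
      (fun i _ => ⟨p0 i, v0 i, hcyc0 i, rfl⟩)
  obtain ⟨ι, hfin, z, w, hzS, hAI, hwpos, hwsum, hrepr⟩ :=
    eq_pos_convex_span_of_mem_convexHull hμS
  letI : Fintype ι := hfin
  -- each of the chosen points is a cycle measure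
  choose P V hPV hzPV using fun i : ι => hzS (Set.mem_range_self i)
  -- each point maps to (0, 1) under Mmap
  have hMz : ∀ i : ι, (Stmt13.Mmap k) (z i) = (0, 1) := by
    intro i
    rw [hzPV i]
    have h1 : Stmt13.flowL k (cycleMeasure k (P i) hk (V i)) = 0 :=
      Stmt13.flowL_eq_zero_of_LTI (Stmt13.cycleMeasure_LTI hk (hPV i))
    have h2 : Stmt13.sumL k (cycleMeasure k (P i) hk (V i)) = 1 := by
      rw [Stmt13.sumL_apply, Stmt13.cycleMeasure_sum hk (hPV i).1]
    simp [Stmt13.Mmap, LinearMap.prod_apply, h1, h2]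
  have hcardpos : 0 < Fintype.card ι := by
    rcases Nat.eq_zero_or_pos (Fintype.card ι) with h | h
    · exfalso
      haveI := Fintype.card_eq_zero_iff.mp h
      rw [Finset.univ_eq_empty, Finset.sum_empty] at hwsum
      exact one_ne_zero hwsum.symm
    · exact h
  have hvsle : vectorSpan ℝ (Set.range z) ≤ LinearMap.ker (Stmt13.Mmap k) := by
    rw [vectorSpan_def]
    rw [Submodule.span_le]
    rintro x hx
    rw [Set.mem_vsub] at hx
    obtain ⟨x1, ⟨i1, rfl⟩, x2, ⟨i2, rfl⟩, rfl⟩ := hx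
    rw [SetLike.mem_coe, LinearMap.mem_ker]
    have : (Stmt13.Mmap k) (z i1 -ᵥ z i2) = (Stmt13.Mmap k) (z i1) - (Stmt13.Mmap k) (z i2) := by
      simp [vsub_eq_sub]
    rw [this, hMz i1, hMz i2, sub_self]
  have hcard : Fintype.card ι ≤ 2 ^ k + 1 := by
    have hAIcard : Fintype.card ι = (Fintype.card ι - 1) + 1 := by omega
    have hvs := hAI.finrank_vectorSpan hAIcard
    have h1 : Module.finrank ℝ (vectorSpan ℝ (Set.range z))
        ≤ Module.finrank ℝ (LinearMap.ker (Stmt13.Mmap k)) := Submodule.finrank_mono hvsle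
    have h2 := Stmt13.finrank_ker_Mmap (k := k)
    omega
  set n := Fintype.card ι with hn
  set e : ι ≃ Fin n := Fintype.equivFin ι with he
  refine ⟨n, hcard, fun m => P (e.symm m), fun m => V (e.symm m), fun m => w (e.symm m),
    fun m => hPV _, fun m => (hwpos _).le, ?_, ?_⟩
  · rw [← hwsum]
    exact Equiv.sum_comp e.symm w
  · intro η
    have hμη : μ η = ∑ i : ι, w i * z i η := by
      rw [← congrFun hrepr η, Finset.sum_apply]
      simp
    rw [hμη]
    rw [← Equiv.sum_comp e.symm (fun i => w i * z i η)]
    refine Finset.sum_congr rfl fun m _ => ?_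
    rw [hzPV (e.symm m)]
end

section
/- Let k ≥ 1 and let C be a directed cycle of length p in the de Bruijn graph G_k, and let ν_C be the shift-invariant measure on {0,1}^ℤ giving weight 1/p to each of the p translates of the p-periodic configuration obtained by tracing C. Then for L ≥ k+1, the measure π_k ν_C on {0,1}^{k+1} extends to a translation-invariant probability measure on {0,1}^{ℤ_L} (the ring with L sites) if and only if p divides L. -/
/-- `μ` (a measure on `{0,1}^{k+1}`) extends to a translation-invariant probability
measure on configurations on the ring `ℤ_L` with `L` sites: the cyclic translation
is `finRotate L`, and the marginal on any `k+1` cyclically consecutive sites equals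
`μ`. -/
def ExtendsToRing (k L : ℕ) (μ : (Fin (k + 1) → Bool) → ℝ) : Prop :=
  ∃ ν : (Fin L → Bool) → ℝ, (∀ x, 0 ≤ ν x) ∧ (∑ x, ν x) = 1 ∧
    (∀ x, ν (x ∘ finRotate L) = ν x) ∧
    ∀ a : Fin L, ∀ ζ : Fin (k + 1) → Bool,
      (∑ x : Fin L → Bool,
        if (∀ t : Fin (k + 1), x ((finRotate L)^[t] a) = ζ t) then ν x else 0) = μ ζ

/-!
If `ν` extends `π_k ν_C` to the ring, pick `x` with `ν x > 0`: every window of `k + 1` sites of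
`x` is an edge of `C`. Consecutive windows overlap in `k` sites and the vertices of `C` are
distinct, so the index of the edge advances by one from each window to the next; going once
around the ring then advances it by `L`, whence `p ∣ L`. Conversely, if `p ∣ L` the
`p`-periodic configuration traced by `C` closes up on the ring, and the uniform measure on its
`p` translates is the required extension.
-/

open Function

theorem val_finRotate_iterate {n : ℕ} (i : Fin n) (t : ℕ) :
    ((finRotate n)^[t] i : ℕ) = (i + t) % n := by
  induction t with
  | zero => exact (Nat.mod_eq_of_lt i.isLt).symm
  | succ t ih =>
    have := i.neZero
    rw [iterate_succ_apply', finRotate_apply, Fin.val_add, ih, Fin.val_one', ← Nat.add_mod,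
      Nat.add_assoc]

theorem isPeriodicPt_finRotate_iff {n m : ℕ} (i : Fin n) :
    IsPeriodicPt (finRotate n) m i ↔ n ∣ m := by
  rw [IsPeriodicPt, IsFixedPt, Fin.ext_iff, val_finRotate_iterate, ← Nat.modEq_zero_iff_dvd,
    ← Nat.ModEq.rfl.add_iff_left (a := (i : ℕ))]
  conv_lhs => rhs; rw [← Nat.mod_eq_of_lt i.isLt]
  rfl

theorem dvd_of_semiconj_finRotate {n p : ℕ} {f : Fin n → Fin p}
    (h : Semiconj f (finRotate n) (finRotate p)) (a : Fin n) : p ∣ n := by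
  rw [← isPeriodicPt_finRotate_iff (f a), IsPeriodicPt, IsFixedPt, ← h.iterate_right n a,
    (isPeriodicPt_finRotate_iff a).mpr dvd_rfl]

def ringWindow {α : Type*} (k : ℕ) {n : ℕ} (x : Fin n → α) (a : Fin n) : Fin (k + 1) → α :=
  fun t => x ((finRotate n)^[t] a)

theorem ringWindow_eq_iff {α : Type*} {k n : ℕ} {x : Fin n → α} {a : Fin n}
    {ζ : Fin (k + 1) → α} :
    ringWindow k x a = ζ ↔ ∀ t : Fin (k + 1), x ((finRotate n)^[t] a) = ζ t :=
  funext_iff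

-- The translate of the `p`-periodic configuration `c` starting at `i`, read on the ring of `n`
-- sites; it closes up consistently around the ring when `p ∣ n`.
def ringLift {α : Type*} (n : ℕ) {p : ℕ} (c : Fin p → α) (i : Fin p) : Fin n → α :=
  fun j => c ((finRotate p)^[j] i)

section ringLift

variable {α : Type*} {n p : ℕ}

theorem ringLift_apply_iterate (hpn : p ∣ n) (c : Fin p → α) (i : Fin p) (a : Fin n)
    (t : ℕ) :
    ringLift n c i ((finRotate n)^[t] a) = c ((finRotate p)^[t] ((finRotate p)^[a] i)) := by
  rw [ringLift, val_finRotate_iterate,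
    ((isPeriodicPt_finRotate_iff i).mpr hpn).iterate_mod_apply, add_comm, iterate_add_apply]

theorem ringLift_finRotate (hpn : p ∣ n) (c : Fin p → α) (i : Fin p) :
    ringLift n c (finRotate p i) = ringLift n c i ∘ finRotate n := by
  funext a
  rw [comp_apply, ← iterate_one (finRotate n), ringLift_apply_iterate hpn, iterate_one,
    ← iterate_succ_apply' (finRotate p), iterate_succ_apply]
  rfl

theorem ringWindow_ringLift (hpn : p ∣ n) (c : Fin p → α) (i : Fin p) (k : ℕ) (a : Fin n) :
    ringWindow k (ringLift n c i) a = ringWindow k c ((finRotate p)^[a] i) := by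
  funext t
  exact ringLift_apply_iterate hpn c i a t

end ringLift

theorem ExtendsToRing.exists_forall_ringWindow_pos {k L : ℕ} {μ : (Fin (k + 1) → Bool) → ℝ}
    (h : ExtendsToRing k L μ) : ∃ x : Fin L → Bool, ∀ a, 0 < μ (ringWindow k x a) := by
  obtain ⟨ν, hν_nonneg, hν_sum, -, hν_marg⟩ := h
  simp only [← ringWindow_eq_iff] at hν_marg
  obtain ⟨x, -, hx⟩ := Finset.exists_ne_zero_of_sum_ne_zero (hν_sum ▸ one_ne_zero)
  refine ⟨x, fun a => ?_⟩
  rw [← hν_marg a]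
  calc 0 < ν x := (hν_nonneg x).lt_of_ne' hx
    _ = if ringWindow k x a = ringWindow k x a then ν x else 0 := (if_pos rfl).symm
    _ ≤ _ := Finset.single_le_sum (f := fun y => if ringWindow k y a = _ then ν y else 0)
        (fun y _ => by split <;> simp [hν_nonneg]) (Finset.mem_univ x)

-- The extension is the uniform measure on the `p` configurations `y i`.
theorem extendsToRing_of_equivariant {k p L : ℕ} (hp : 0 < p) (y : Fin p → Fin L → Bool)
    (hy : ∀ i, y (finRotate p i) = y i ∘ finRotate L) {μ : (Fin (k + 1) → Bool) → ℝ}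
    (hμ : ∀ a ζ, (p : ℝ)⁻¹ * ∑ i, (if ringWindow k (y i) a = ζ then 1 else 0) = μ ζ) :
    ExtendsToRing k L μ := by
  refine ⟨fun x => (p : ℝ)⁻¹ * ∑ i, if y i = x then 1 else 0, fun x => by positivity, ?_, ?_, ?_⟩
  · rw [← Finset.mul_sum, Finset.sum_comm]
    simp only [Finset.sum_ite_eq, Finset.mem_univ, if_true, Finset.sum_const, Finset.card_univ,
      Fintype.card_fin, nsmul_eq_mul, mul_one]
    exact inv_mul_cancel₀ (by positivity)
  · intro x
    refine congrArg _ ?_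
    calc ∑ i, (if y i = x ∘ finRotate L then (1 : ℝ) else 0)
        = ∑ i, if y (finRotate p i) = x ∘ finRotate L then 1 else 0 :=
          (Equiv.sum_comp (finRotate p) _).symm
      _ = ∑ i, if y i = x then 1 else 0 := by
          simp only [hy, (finRotate L).surjective.injective_comp_right.eq_iff]
  · intro a ζ
    simp only [← ringWindow_eq_iff, ← hμ a ζ]
    rw [← Finset.sum_filter, ← Finset.mul_sum, Finset.sum_comm]
    simp

def cycleTrace {k p : ℕ} (hk : 0 < k) (v : Fin p → Fin k → Bool) : Fin p → Bool :=
  fun i => v i ⟨0, hk⟩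

namespace IsCycle

variable {k p : ℕ} {v : Fin p → Fin k → Bool}

theorem apply_eq_cycleTrace (hv : IsCycle k p v) (hk : 0 < k) (i : Fin p) (j : Fin k) :
    v i j = cycleTrace hk v ((finRotate p)^[j] i) := by
  obtain ⟨j, hj⟩ := j
  induction j generalizing i with
  | zero => rfl
  | succ j ih => rw [hv.2.2 i j hj, ih, iterate_succ_apply]

theorem cons_eq_ringWindow (hv : IsCycle k p v) (hk : 0 < k) (i : Fin p) :
    Fin.cons (v i ⟨0, hk⟩) (v (finRotate p i)) = ringWindow k (cycleTrace hk v) i := by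
  funext t
  cases t using Fin.cases with
  | zero => rfl
  | succ j => rw [Fin.cons_succ, hv.apply_eq_cycleTrace hk, ← iterate_succ_apply]; rfl

theorem cycleMeasure_eq (hv : IsCycle k p v) (hk : 0 < k) (ζ : Fin (k + 1) → Bool) :
    cycleMeasure k p hk v ζ =
      (p : ℝ)⁻¹ * ∑ i, if ringWindow k (cycleTrace hk v) i = ζ then 1 else 0 := by
  simp only [cycleMeasure, hv.cons_eq_ringWindow hk, eq_comm]

theorem exists_ringWindow_eq_of_cycleMeasure_pos (hv : IsCycle k p v) (hk : 0 < k)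
    {ζ : Fin (k + 1) → Bool} (h : 0 < cycleMeasure k p hk v ζ) :
    ∃ i, ringWindow k (cycleTrace hk v) i = ζ := by
  by_contra! hne
  simp [hv.cycleMeasure_eq hk, hne] at h

theorem semiconj_of_ringWindow_eq (hv : IsCycle k p v) (hk : 0 < k) {L : ℕ} (x : Fin L → Bool)
    (f : Fin L → Fin p) (hf : ∀ a, ringWindow k (cycleTrace hk v) (f a) = ringWindow k x a) :
    Semiconj f (finRotate L) (finRotate p) := by
  intro a
  apply hv.2.1
  funext j
  have h₁ := congrFun (hf (finRotate L a)) j.castSucc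
  have h₂ := congrFun (hf a) j.succ
  simp only [ringWindow, Fin.val_castSucc, Fin.val_succ, iterate_succ_apply] at h₁ h₂
  rw [hv.apply_eq_cycleTrace hk, hv.apply_eq_cycleTrace hk, h₁, h₂]

end IsCycle

theorem stmt14_general (k p L : ℕ) (hk : 0 < k)
    (v : Fin p → (Fin k → Bool)) (hv : IsCycle k p v) :
    ExtendsToRing k L (cycleMeasure k p hk v) ↔ p ∣ L := by
  constructor
  · intro h
    obtain ⟨x, hx⟩ := h.exists_forall_ringWindow_pos
    rcases L.eq_zero_or_pos with rfl | hL
    · exact dvd_zero p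
    choose f hf using fun a => hv.exists_ringWindow_eq_of_cycleMeasure_pos hk (hx a)
    exact dvd_of_semiconj_finRotate (hv.semiconj_of_ringWindow_eq hk x f hf) ⟨0, hL⟩
  · intro hpL
    refine extendsToRing_of_equivariant hv.1 (ringLift L (cycleTrace hk v))
      (ringLift_finRotate hpL _) fun a ζ => ?_
    simp only [ringWindow_ringLift hpL, hv.cycleMeasure_eq hk, Equiv.Perm.iterate_eq_pow]
    exact congrArg _ (Equiv.sum_comp ((finRotate p) ^ (a : ℕ))
      fun i => if ringWindow k _ i = ζ then 1 else 0)

theorem stmt14 (k p L : ℕ) (hk : 0 < k) (hL : k + 1 ≤ L)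
    (v : Fin p → (Fin k → Bool)) (hv : IsCycle k p v) :
    ExtendsToRing k L (cycleMeasure k p hk v) ↔ p ∣ L :=
  stmt14_general k p L hk v hv
end

section
/- Let μ_1 be a locally translation invariant probability measure on {0,1}^2, written as μ_1 = c_0 π_1ν_{C_0} + c_1 π_1ν_{C_1} + c_2 π_1ν_{C_2} with c_i ≥ 0, ∑c_i = 1, where C_0, C_1 are the loops at vertices 0, 1 of G_1 and C_2 is the 2-cycle. If L = 2ℓ+1 is odd with L ≥ 2, then μ_1 has a translation-invariant extension to {0,1}^{ℤ_L} if and only if c_2 ≤ 1 − 1/L. -/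
open Finset

section Windows

variable {k L : ℕ}

def windowCount (x : Fin L → Bool) (ζ : Fin (k + 1) → Bool) : ℕ :=
  #{a | ∀ t : Fin (k + 1), x ((finRotate L)^[t] a) = ζ t}

theorem ExtendsToRing.exists_sum_mul_windowCount {μ : (Fin (k + 1) → Bool) → ℝ}
    (h : ExtendsToRing k L μ) :
    ∃ ν : (Fin L → Bool) → ℝ, (∀ x, 0 ≤ ν x) ∧ ∑ x, ν x = 1 ∧
      ∀ ζ, ∑ x, ν x * windowCount x ζ = L * μ ζ := by
  obtain ⟨ν, hν, hν₁, -, hμ⟩ := h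
  refine ⟨ν, hν, hν₁, fun ζ => ?_⟩
  simp_rw [windowCount, natCast_card_filter, mul_sum, mul_ite, mul_one, mul_zero]
  rw [sum_comm]
  simp [hμ]

noncomputable def orbitMeasure (x y : Fin L → Bool) : ℝ :=
  #{j | (fun i => x (i + j)) = y} / L

theorem orbitMeasure_nonneg (x y : Fin L → Bool) : 0 ≤ orbitMeasure x y := by
  unfold orbitMeasure; positivity

variable [NeZero L]

theorem sum_orbitMeasure (x : Fin L → Bool) : ∑ y, orbitMeasure x y = 1 := by
  simp_rw [orbitMeasure, ← sum_div, ← Nat.cast_sum,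
    ← card_eq_sum_card_fiberwise (s := univ) (t := univ) (fun _ _ => mem_coe.2 (mem_univ _))]
  simp [NeZero.ne]

theorem orbitMeasure_comp_finRotate (x y : Fin L → Bool) :
    orbitMeasure x (y ∘ finRotate L) = orbitMeasure x y := by
  unfold orbitMeasure
  congr 2
  refine card_equiv (Equiv.subRight 1) fun j => ?_
  simp only [mem_filter, mem_univ, true_and, funext_iff, Function.comp_apply, finRotate_apply,
    Equiv.subRight_apply]
  rw [(Equiv.subRight (1 : Fin L)).forall_congr_left (p := fun i => x (i + (j - 1)) = y i)]
  simp only [Equiv.subRight_symm_apply, add_add_sub_cancel]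

theorem sum_ite_window_orbitMeasure (x : Fin L → Bool) (a : Fin L) (ζ : Fin (k + 1) → Bool) :
    (∑ y, if (∀ t : Fin (k + 1), y ((finRotate L)^[t] a) = ζ t) then orbitMeasure x y else 0)
      = windowCount x ζ / L := by
  have hcomm (j : Fin L) (t : ℕ) : (finRotate L)^[t] (a + j) = (finRotate L)^[t] a + j :=
    Function.Commute.iterate_left (f := finRotate L) (g := (· + j))
      (fun i => by simp [finRotate_apply, add_right_comm]) t a
  have hcount : #{j | ∀ t : Fin (k + 1), x ((finRotate L)^[t] a + j) = ζ t} = windowCount x ζ :=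
    card_equiv (Equiv.addLeft a) fun j => by simp [hcomm]
  rw [← hcount, natCast_card_filter, sum_div]
  simp_rw [orbitMeasure, natCast_card_filter, sum_div]
  rw [← sum_filter, sum_comm]
  refine sum_congr rfl fun j _ => ?_
  simp [ite_div, sum_ite_eq]

theorem extendsToRing_of_mixture {ι : Type*} [Fintype ι] (w : ι → ℝ) (hw : ∀ i, 0 ≤ w i)
    (hw₁ : ∑ i, w i = 1) (x : ι → Fin L → Bool) {μ : (Fin (k + 1) → Bool) → ℝ}
    (hμ : ∀ ζ, μ ζ = ∑ i, w i * (windowCount (x i) ζ / L)) : ExtendsToRing k L μ := by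
  refine ⟨fun y => ∑ i, w i * orbitMeasure (x i) y,
    fun y => sum_nonneg fun i _ => mul_nonneg (hw i) (orbitMeasure_nonneg _ _), ?_,
    fun y => by simp only [orbitMeasure_comp_finRotate], fun a ζ => ?_⟩
  · rw [sum_comm]
    simp [← mul_sum, sum_orbitMeasure, hw₁]
  · rw [hμ, ← sum_filter, sum_comm]
    simp_rw [← sum_ite_window_orbitMeasure (x _) a, mul_sum, mul_ite, mul_zero, sum_filter]

end Windows

section Pairs

variable {L : ℕ} [NeZero L]

def pairCount (x : Fin L → Bool) (b c : Bool) : ℕ :=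
  #{m | x m = b ∧ x (m + 1) = c}

theorem windowCount_eq_pairCount (x : Fin L → Bool) (ζ : Fin 2 → Bool) :
    windowCount x ζ = pairCount x (ζ 0) (ζ 1) := by
  simp [windowCount, pairCount, Fin.forall_fin_two, finRotate_apply]

theorem pairCount_add_pairCount_not (x : Fin L → Bool) (b : Bool) :
    pairCount x b (!b) + pairCount x (!b) b = #{m | x m ≠ x (m + 1)} := by
  simp only [pairCount, card_filter, ← sum_add_distrib]
  refine sum_congr rfl fun m _ => ?_
  cases b <;> cases x m <;> cases x (m + 1) <;> simp

theorem pairCount_not_comm (x : Fin L → Bool) (b : Bool) :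
    pairCount x b (!b) = pairCount x (!b) b := by
  have hfst : #{m | x m = b} = pairCount x b b + pairCount x b (!b) := by
    simp only [pairCount, card_filter, ← sum_add_distrib]
    refine sum_congr rfl fun m _ => ?_
    cases b <;> cases x m <;> cases x (m + 1) <;> simp
  have hsnd : #{m | x (m + 1) = b} = pairCount x b b + pairCount x (!b) b := by
    simp only [pairCount, card_filter, ← sum_add_distrib]
    refine sum_congr rfl fun m _ => ?_
    cases b <;> cases x m <;> cases x (m + 1) <;> simp
  have hshift : #{m | x (m + 1) = b} = #{m | x m = b} :=
    card_equiv (Equiv.addRight 1) fun m => by simp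
  omega

theorem two_mul_pairCount_le (x : Fin L → Bool) (b : Bool) : 2 * pairCount x b (!b) ≤ L :=
  calc 2 * pairCount x b (!b) = pairCount x b (!b) + pairCount x (!b) b := by
        rw [pairCount_not_comm]; ring
    _ = #{m | x m ≠ x (m + 1)} := pairCount_add_pairCount_not x b
    _ ≤ L := (card_le_univ _).trans_eq (Fintype.card_fin L)

theorem pairCount_const (s b c : Bool) :
    pairCount (fun _ : Fin L => s) b c = if b = s ∧ c = s then L else 0 := by
  by_cases h : b = s ∧ c = s
  · simp [pairCount, h]
  · rw [if_neg h, pairCount, card_eq_zero, filter_eq_empty_iff]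
    rintro m - ⟨rfl, rfl⟩
    exact h ⟨rfl, rfl⟩

end Pairs

theorem ExtendsToRing.mul_apply_false_true_le {ℓ : ℕ} {μ : (Fin 2 → Bool) → ℝ}
    (h : ExtendsToRing 1 (2 * ℓ + 1) μ) : (2 * ℓ + 1) * μ ![false, true] ≤ ℓ := by
  obtain ⟨ν, hν, hν₁, hμ⟩ := h.exists_sum_mul_windowCount
  have hcount (x : Fin (2 * ℓ + 1) → Bool) : (windowCount x ![false, true] : ℝ) ≤ ℓ := by
    have := two_mul_pairCount_le x false
    rw [Bool.not_false] at this
    rw [windowCount_eq_pairCount]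
    exact_mod_cast (by omega : pairCount x false true ≤ ℓ)
  calc (2 * ℓ + 1) * μ ![false, true] = ∑ x, ν x * windowCount x ![false, true] := by
        rw [hμ]; push_cast; ring
    _ ≤ ∑ x, ν x * ℓ := sum_le_sum fun x _ => mul_le_mul_of_nonneg_left (hcount x) (hν x)
    _ = ℓ := by rw [← sum_mul, hν₁, one_mul]

section Alternating

variable {ℓ : ℕ}

def alternating (ℓ : ℕ) (s : Bool) (i : Fin (2 * ℓ + 1)) : Bool :=
  if Even (i : ℕ) then s else !s

theorem alternating_last (s : Bool) : alternating ℓ s (Fin.last _) = s := by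
  simp [alternating]

theorem alternating_add_one_eq_iff (s : Bool) (m : Fin (2 * ℓ + 1)) :
    alternating ℓ s (m + 1) = alternating ℓ s m ↔ m = Fin.last _ := by
  by_cases hm : m = Fin.last _
  · simp [hm, alternating]
  · simp only [alternating, Fin.val_add_one, hm, if_false, Nat.even_add_one, iff_false]
    split_ifs <;> simp

theorem pairCount_alternating_self (s b : Bool) :
    pairCount (alternating ℓ s) b b = if b = s then 1 else 0 := by
  have hmem (m : Fin (2 * ℓ + 1)) :
      alternating ℓ s m = b ∧ alternating ℓ s (m + 1) = b ↔ m = Fin.last _ ∧ b = s := by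
    by_cases hm : m = Fin.last _
    · subst hm
      rw [(alternating_add_one_eq_iff s _).2 rfl, alternating_last]
      simp [eq_comm]
    · have := (alternating_add_one_eq_iff s m).not.2 hm
      simp only [hm, false_and, iff_false]
      rintro ⟨h, h'⟩
      exact this (h'.trans h.symm)
  simp only [pairCount, hmem]
  split_ifs with h <;> simp [h, filter_eq']

theorem pairCount_alternating_of_ne (s : Bool) {b c : Bool} (hbc : b ≠ c) :
    pairCount (alternating ℓ s) b c = ℓ := by
  obtain rfl : c = !b := by cases b <;> cases c <;> simp_all
  have hwalls : #{m | alternating ℓ s m ≠ alternating ℓ s (m + 1)} = 2 * ℓ := by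
    have hwall (m : Fin (2 * ℓ + 1)) :
        alternating ℓ s m ≠ alternating ℓ s (m + 1) ↔ m ≠ Fin.last _ :=
      ne_comm.trans (alternating_add_one_eq_iff s m).not
    simp_rw [hwall, filter_ne', card_erase_of_mem (mem_univ _), card_univ, Fintype.card_fin,
      Nat.add_sub_cancel]
  have := pairCount_add_pairCount_not (alternating ℓ s) b
  rw [← pairCount_not_comm] at this
  omega

end Alternating

theorem extendsToRing_of_mul_le {c₀ c₁ c₂ : ℝ} (h₀ : 0 ≤ c₀) (h₁ : 0 ≤ c₁) (h₂ : 0 ≤ c₂)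
    (hsum : c₀ + c₁ + c₂ = 1) {μ : (Fin 2 → Bool) → ℝ}
    (hμ : ∀ η : Fin 2 → Bool,
      μ η = c₀ * (if η 0 = false ∧ η 1 = false then 1 else 0)
          + c₁ * (if η 0 = true ∧ η 1 = true then 1 else 0)
          + c₂ * (if η 0 ≠ η 1 then 1 / 2 else 0))
    {ℓ : ℕ} (hℓ : 1 ≤ ℓ) (hc₂ : (2 * ℓ + 1) * c₂ ≤ 2 * ℓ) : ExtendsToRing 1 (2 * ℓ + 1) μ := by
  have hℓ₀ : (0 : ℝ) < 2 * ℓ := by positivity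
  -- the weight of the alternating configurations, whose wall density is `2ℓ / L`
  set α : ℝ := (2 * ℓ + 1) * c₂ / (2 * ℓ)
  have hα₀ : 0 ≤ α := by positivity
  have hα₁ : α ≤ 1 := div_le_one_of_le₀ hc₂ hℓ₀.le
  have hα : α * (2 * ℓ) = (2 * ℓ + 1) * c₂ := div_mul_cancel₀ _ hℓ₀.ne'
  have hs : 0 < c₀ + c₁ := by nlinarith
  clear_value α
  refine extendsToRing_of_mixture (ι := Bool × Bool)
    (fun i => (if i.1 then α else 1 - α) * (if i.2 then c₁ else c₀) / (c₀ + c₁)) ?_ ?_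
    (fun i => if i.1 then alternating ℓ i.2 else fun _ => i.2) fun ζ => ?_
  · exact fun i => div_nonneg (mul_nonneg (by split_ifs <;> linarith) (by split_ifs <;> assumption))
      hs.le
  · simp only [Fintype.sum_prod_type, Fintype.sum_bool, Bool.false_eq_true, ↓reduceIte]
    field_simp
    ring
  · simp only [windowCount_eq_pairCount, Fintype.sum_prod_type, Fintype.sum_bool, hμ]
    cases ζ 0 <;> cases ζ 1 <;>
      simp only [pairCount_const, pairCount_alternating_self, pairCount_alternating_of_ne, ne_eq,
        and_self, and_true, and_false, Bool.true_eq_false, Bool.false_eq_true, not_true_eq_false,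
        not_false_eq_true, ↓reduceIte, mul_one, mul_zero, add_zero, zero_add, zero_div, one_div,
        CharP.cast_eq_zero, Nat.cast_add, Nat.cast_mul, Nat.cast_ofNat, Nat.cast_one] <;>
      field_simp
    · linear_combination c₀ * (2 * ℓ + 1) * hsum + c₀ * hα
    · linear_combination -(c₀ + c₁) * hα
    · linear_combination -(c₀ + c₁) * hα
    · linear_combination c₁ * (2 * ℓ + 1) * hsum + c₁ * hα

/-- An LTI measure `μ_1 = c_0 π_1ν_{C_0} + c_1 π_1ν_{C_1} + c_2 π_1ν_{C_2}` on
`{0,1}^2` (where `C_0, C_1` are the loops at `0`, `1` of `G_1` and `C_2` is the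
2-cycle) extends to a TI measure on the ring with an odd number `L ≥ 2` of sites
iff `c_2 ≤ 1 - 1/L`. -/
theorem stmt16 (c₀ c₁ c₂ : ℝ) (h₀ : 0 ≤ c₀) (h₁ : 0 ≤ c₁) (h₂ : 0 ≤ c₂)
    (hsum : c₀ + c₁ + c₂ = 1) (μ : (Fin 2 → Bool) → ℝ)
    (hμ : ∀ η : Fin 2 → Bool,
      μ η = c₀ * (if η 0 = false ∧ η 1 = false then 1 else 0)
          + c₁ * (if η 0 = true ∧ η 1 = true then 1 else 0)
          + c₂ * (if η 0 ≠ η 1 then 1 / 2 else 0))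
    (L ℓ : ℕ) (hodd : L = 2 * ℓ + 1) (hL : 2 ≤ L) :
    ExtendsToRing 1 L μ ↔ c₂ ≤ 1 - 1 / (L : ℝ) := by
  subst hodd
  have hL' : (0 : ℝ) < 2 * ℓ + 1 := by positivity
  have hc₂ : c₂ ≤ 1 - 1 / ((2 * ℓ + 1 : ℕ) : ℝ) ↔ (2 * ℓ + 1) * c₂ ≤ 2 * ℓ := by
    push_cast
    rw [one_sub_div hL'.ne', le_div_iff₀ hL']
    constructor <;> intro h <;> linarith
  rw [hc₂]
  refine ⟨fun h => ?_, extendsToRing_of_mul_le h₀ h₁ h₂ hsum hμ (by omega)⟩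
  have hμ₀₁ : μ ![false, true] = c₂ / 2 := by simp [hμ, div_eq_mul_inv]
  have := h.mul_apply_false_true_le
  rw [hμ₀₁] at this
  linarith
end

section
/- Let Λ = {0,1,3} ⊂ ℤ and let μ_Λ be the probability measure on {0,1}^Λ assigning probability 1/2 to each of the configurations (η_0,η_1,η_3) = (1,1,0) and (0,0,1). Then μ_Λ is locally translation invariant (any two translated subsets of Λ have translated marginals), but there is no probability measure μ_4 on {0,1}^{{0,1,2,3}} whose marginal on coordinates {0,1,3} is μ_Λ and which is locally translation invariant; consequently μ_Λ admits no shift-invariant extension to {0,1}^ℤ. -/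
open MeasureTheory

lemma snoc4 (a b c σ : Bool) : (Fin.snoc ![a,b,c] σ : Fin 4 → Bool) = ![a,b,c,σ] := by
  funext i; fin_cases i <;> simp [Fin.snoc] <;> rfl

lemma cons4 (a b c σ : Bool) : (Fin.cons σ ![a,b,c] : Fin 4 → Bool) = ![σ,a,b,c] := by
  funext i; fin_cases i <;> rfl

lemma measCoord (i : ℤ) (a : Bool) : MeasurableSet {x : ℤ → Bool | x i = a} := by
  have : {x : ℤ → Bool | x i = a} = (fun x : ℤ → Bool => x i) ⁻¹' {a} := by ext x; simp
  rw [this]; exact measurable_pi_apply i trivial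

/-- The measure on configurations on `Λ = {0,1,3} ⊂ ℤ` (coordinates `(η_0,η_1,η_3)`)
giving probability `1/2` to each of `(1,1,0)` and `(0,0,1)` is locally translation
invariant (the only nontrivial pairs of translated subsets of `Λ` are the
singletons `{0}, {1}, {3}`, whose marginals all coincide), but it has no LTI
extension to the interval `{0,1,2,3}`, and hence no shift-invariant extension to
`{0,1}^ℤ`. -/
theorem stmt19 (μΛ : Bool → Bool → Bool → ℝ)
    (hμ : ∀ a b c : Bool, μΛ a b c
      = (if a = true ∧ b = true ∧ c = false then (1 : ℝ) / 2 else 0)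
        + (if a = false ∧ b = false ∧ c = true then (1 : ℝ) / 2 else 0)) :
    (∀ b : Bool, (∑ y : Bool, ∑ z : Bool, μΛ b y z) = (∑ x : Bool, ∑ z : Bool, μΛ x b z)
        ∧ (∑ x : Bool, ∑ z : Bool, μΛ x b z) = ∑ x : Bool, ∑ y : Bool, μΛ x y b) ∧
    (¬ ∃ μ₄ : (Fin 4 → Bool) → ℝ, (∀ η, 0 ≤ μ₄ η) ∧ (∑ η, μ₄ η) = 1 ∧ IsLTI 3 μ₄ ∧
        ∀ a b c : Bool, (∑ σ : Bool, μ₄ ![a, b, σ, c]) = μΛ a b c) ∧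
    (¬ ∃ μ : Measure (ℤ → Bool), IsProbabilityMeasure μ ∧
        Measure.map (fun x : ℤ → Bool => fun i => x (i + 1)) μ = μ ∧
        ∀ a b c : Bool,
          μ {x : ℤ → Bool | x 0 = a ∧ x 1 = b ∧ x 3 = c} = ENNReal.ofReal (μΛ a b c)) := by
  refine ⟨?_, ?_, ?_⟩
  · intro b
    cases b <;> constructor <;> simp [hμ, Fintype.sum_bool]
  · rintro ⟨μ₄, hpos, hsum, hLTI, hmarg⟩
    have key : ∀ a b c : Bool, μΛ a b c = 0 →
        μ₄ ![a,b,false,c] = 0 ∧ μ₄ ![a,b,true,c] = 0 := by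
      intro a b c h0
      have hm := hmarg a b c
      rw [Fintype.sum_bool] at hm
      have h1 := hpos ![a,b,false,c]
      have h2 := hpos ![a,b,true,c]
      constructor <;> linarith
    obtain ⟨z1, z2⟩ := key true true true (by simp [hμ])
    obtain ⟨-, z3⟩ := key false true true (by simp [hμ])
    obtain ⟨-, z4⟩ := key false true false (by simp [hμ])
    have L1 := hLTI ![true,true,true]
    rw [Fintype.sum_bool, Fintype.sum_bool, snoc4, snoc4, cons4, cons4] at L1
    have L2 := hLTI ![true,true,false]
    rw [Fintype.sum_bool, Fintype.sum_bool, snoc4, snoc4, cons4, cons4] at L2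
    have hm := hmarg true true false
    rw [Fintype.sum_bool] at hm
    have hv : μΛ true true false = 1/2 := by simp [hμ]
    rw [hv] at hm
    -- L1 : μ₄ ![t,t,t,t] + μ₄ ![t,t,t,f] = μ₄ ![t,t,t,t] + μ₄ ![f,t,t,t]
    -- L2 : μ₄ ![t,t,f,t] + μ₄ ![t,t,f,f] = μ₄ ![t,t,t,f] + μ₄ ![f,t,t,f]
    -- hm : μ₄ ![t,t,t,f] + μ₄ ![t,t,f,f] = 1/2
    linarith
  · rintro ⟨μ, hprob, hshift, hcyl⟩
    set T : (ℤ → Bool) → (ℤ → Bool) := fun x i => x (i + 1) with hTdef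
    have hT : Measurable T := measurable_pi_lambda _ fun i => measurable_pi_apply _
    have hshift' : ∀ S : Set (ℤ → Bool), MeasurableSet S → μ (T ⁻¹' S) = μ S := by
      intro S hS
      conv_rhs => rw [← hshift]
      rw [Measure.map_apply hT hS]
    set D : Bool → Bool → Bool → Bool → Set (ℤ → Bool) :=
      fun a b c d => {x | x 0 = a ∧ x 1 = b ∧ x 2 = c ∧ x 3 = d} with hD
    have measD : ∀ a b c d, MeasurableSet (D a b c d) := fun a b c d =>
      (measCoord 0 a).inter ((measCoord 1 b).inter ((measCoord 2 c).inter (measCoord 3 d)))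
    -- zero cylinders
    have hz : ∀ a b c : Bool, μΛ a b c = 0 → μ {x : ℤ → Bool | x 0 = a ∧ x 1 = b ∧ x 3 = c} = 0 := by
      intro a b c h0
      rw [hcyl a b c, h0, ENNReal.ofReal_zero]
    have e111 : μ {x : ℤ → Bool | x 0 = true ∧ x 1 = true ∧ x 3 = true} = 0 := hz _ _ _ (by simp [hμ])
    have e010 : μ {x : ℤ → Bool | x 0 = false ∧ x 1 = true ∧ x 3 = false} = 0 := hz _ _ _ (by simp [hμ])
    have e011 : μ {x : ℤ → Bool | x 0 = false ∧ x 1 = true ∧ x 3 = true} = 0 := hz _ _ _ (by simp [hμ])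
    have hsub : ∀ a b c d : Bool, D a b c d ⊆ {x : ℤ → Bool | x 0 = a ∧ x 1 = b ∧ x 3 = d} := by
      intro a b c d x hx
      simp only [hD, Set.mem_setOf_eq] at hx ⊢
      exact ⟨hx.1, hx.2.1, hx.2.2.2⟩
    have d1101 : μ (D true true false true) = 0 := measure_mono_null (hsub _ _ _ _) e111
    have d1111 : μ (D true true true true) = 0 := measure_mono_null (hsub _ _ _ _) e111
    have d0110 : μ (D false true true false) = 0 := measure_mono_null (hsub _ _ _ _) e010
    have d0111 : μ (D false true true true) = 0 := measure_mono_null (hsub _ _ _ _) e011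
    -- splits
    have split2 : ∀ a b c : Bool, μ {x : ℤ → Bool | x 0 = a ∧ x 1 = b ∧ x 2 = c}
        = μ (D a b c false) + μ (D a b c true) := by
      intro a b c
      have hU : {x : ℤ → Bool | x 0 = a ∧ x 1 = b ∧ x 2 = c} = D a b c false ∪ D a b c true := by
        ext x
        simp only [hD, Set.mem_union, Set.mem_setOf_eq]
        cases h3 : x 3 <;> tauto
      have hdis : Disjoint (D a b c false) (D a b c true) := by
        rw [Set.disjoint_left]
        intro x hx hx'
        simp only [hD, Set.mem_setOf_eq] at hx hx'
        simp_all
      rw [hU, measure_union hdis (measD _ _ _ _)]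
    have split0 : ∀ b c d : Bool, μ {x : ℤ → Bool | x 1 = b ∧ x 2 = c ∧ x 3 = d}
        = μ (D false b c d) + μ (D true b c d) := by
      intro b c d
      have hU : {x : ℤ → Bool | x 1 = b ∧ x 2 = c ∧ x 3 = d} = D false b c d ∪ D true b c d := by
        ext x
        simp only [hD, Set.mem_union, Set.mem_setOf_eq]
        cases h0 : x 0 <;> tauto
      have hdis : Disjoint (D false b c d) (D true b c d) := by
        rw [Set.disjoint_left]
        intro x hx hx'
        simp only [hD, Set.mem_setOf_eq] at hx hx'
        simp_all
      rw [hU, measure_union hdis (measD _ _ _ _)]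
    have splitE : μ {x : ℤ → Bool | x 0 = true ∧ x 1 = true ∧ x 3 = false}
        = μ (D true true false false) + μ (D true true true false) := by
      have hU : {x : ℤ → Bool | x 0 = true ∧ x 1 = true ∧ x 3 = false}
          = D true true false false ∪ D true true true false := by
        ext x
        simp only [hD, Set.mem_union, Set.mem_setOf_eq]
        cases h2 : x 2 <;> tauto
      have hdis : Disjoint (D true true false false) (D true true true false) := by
        rw [Set.disjoint_left]
        intro x hx hx'
        simp only [hD, Set.mem_setOf_eq] at hx hx'
        simp_all
      rw [hU, measure_union hdis (measD _ _ _ _)]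
    -- shift equalities
    have shiftEq : ∀ a b c : Bool, μ {x : ℤ → Bool | x 1 = a ∧ x 2 = b ∧ x 3 = c}
        = μ {x : ℤ → Bool | x 0 = a ∧ x 1 = b ∧ x 2 = c} := by
      intro a b c
      have hpre : T ⁻¹' {x : ℤ → Bool | x 0 = a ∧ x 1 = b ∧ x 2 = c}
          = {x : ℤ → Bool | x 1 = a ∧ x 2 = b ∧ x 3 = c} := by
        ext x
        simp only [hTdef, Set.mem_preimage, Set.mem_setOf_eq]
        norm_num
      have hmeas : MeasurableSet {x : ℤ → Bool | x 0 = a ∧ x 1 = b ∧ x 2 = c} :=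
        (measCoord 0 a).inter ((measCoord 1 b).inter (measCoord 2 c))
      rw [← hpre, hshift' _ hmeas]
    -- derive zeros
    have h1 : μ {x : ℤ → Bool | x 0 = true ∧ x 1 = true ∧ x 2 = true} = 0 := by
      rw [← shiftEq, split0, d0111, d1111, add_zero]
    have d1110 : μ (D true true true false) = 0 := by
      have := split2 true true true
      rw [h1, d1111, add_zero] at this
      exact this.symm
    have h2 : μ {x : ℤ → Bool | x 0 = true ∧ x 1 = true ∧ x 2 = false} = 0 := by
      rw [← shiftEq, split0, d0110, d1110, add_zero]
    have d1100 : μ (D true true false false) = 0 := by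
      have := split2 true true false
      rw [h2, d1101, add_zero] at this
      exact this.symm
    have hfin : μ {x : ℤ → Bool | x 0 = true ∧ x 1 = true ∧ x 3 = false} = 0 := by
      rw [splitE, d1100, d1110, add_zero]
    rw [hcyl] at hfin
    have : μΛ true true false = 1/2 := by simp [hμ]
    rw [this] at hfin
    norm_num at hfin
end
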